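/- arXiv:math/0012245 — 6 statements merged into one kernel-verified Lean document; each statement's English description precedes it below -/
import Mathlib

section
/- Let A be a free abelian group of rank 2 and f : A → S an abelian flag function (i.e. f is invariant under multiplication by nonzero integers, and A admits a strict filtration by subgroups indexed by a totally ordered set whose union is A, such that f is constant on each difference set). Then f takes at most two distinct values on A \ {0}. -/
/-!
For a filtration `F` of `ℤ × ℤ`, the level of `x` is the lower set `{i | x ∈ F i}`. Levels
behave like an ultrametric: the level of `x + y` contains the smaller of the levels of `x` and
`y`, so among `a, b, c` with `a + b + c = 0` two have the same level `L`. If `L` has a greatest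
element `i`, both vectors lie in the layer `F i \ ⋃_{j > i} F j`, where `f` is constant.
Otherwise an increasing sequence in `L` yields a strictly decreasing chain of subgroups all
containing the two vectors; if these are independent they span a subgroup of finite index,
and such a chain cannot exist.

Given three nonzero vectors, either two are proportional, and `f` agrees on them by
invariance, or they are pairwise independent and Cramer's rule rescales them to sum to zero.
-/

/-- A function on an abelian group is invariant if `f (n • a) = f a` for all nonzero
integers `n`. -/
def InvariantZ {A : Type*} [AddCommGroup A] {S : Type*} (f : A → S) : Prop :=
  ∀ n : ℤ, n ≠ 0 → ∀ a : A, f (n • a) = f a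

/-- `f` admits a strict filtration of `A` by subgroups, indexed by a totally ordered set,
exhausting `A`, such that `f` is constant on each successive difference set
`A_ι \ ⋃_{ι' > ι} A_{ι'}`. -/
def HasFlagFiltration {A : Type*} [AddCommGroup A] {S : Type*} (f : A → S) : Prop :=
  ∃ (I : Type) (lo : LinearOrder I) (F : I → AddSubgroup A),
    (∀ a : A, ∃ i : I, a ∈ F i) ∧
    (∀ i j : I, lo.lt i j → F j < F i) ∧
    (∀ (i : I) (x y : A), x ∈ F i → (∀ j : I, lo.lt i j → x ∉ F j) →
      y ∈ F i → (∀ j : I, lo.lt i j → y ∉ F j) → f x = f y)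

/-- Abelian flag function on a finitely generated torsion-free abelian group. -/
def IsAF {A : Type*} [AddCommGroup A] {S : Type*} (f : A → S) : Prop :=
  InvariantZ f ∧ HasFlagFiltration f


lemma AddSubgroup.finiteIndex_of_forall_zsmul_mem {A : Type*} [AddCommGroup A] [AddGroup.FG A]
    {H : AddSubgroup A} {d : ℤ} (hd : d ≠ 0) (h : ∀ x, d • x ∈ H) : H.FiniteIndex := by
  rw [AddSubgroup.finiteIndex_iff_finite_quotient]
  refine AddCommGroup.finite_of_fg_isAddTorsion (G := A ⧸ H) fun x => ?_
  induction x using QuotientAddGroup.induction_on with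
  | H x =>
    exact isOfFinAddOrder_iff_zsmul_eq_zero.mpr ⟨d, hd, (QuotientAddGroup.eq_zero_iff _).mpr (h x)⟩

lemma AddSubgroup.not_strictAnti_of_forall_le {A : Type*} [AddGroup A] {H : AddSubgroup A}
    [H.FiniteIndex] {G : ℕ → AddSubgroup A} (hH : ∀ n, H ≤ G n) : ¬StrictAnti G := by
  intro hG
  have hindex : StrictMono fun n => (G n).index := fun m n hmn =>
    haveI := AddSubgroup.finiteIndex_of_le (hH n)
    AddSubgroup.index_strictAnti (hG hmn)
  exact (hindex.id_le (H.index + 1)).not_gt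
    (Nat.lt_succ_of_le (AddSubgroup.index_antitone (hH _)))

lemma eq_or_eq_or_eq_of_min_le {α : Type*} [LinearOrder α] {a b c : α} (ha : min b c ≤ a)
    (hb : min c a ≤ b) (hc : min a b ≤ c) : a = b ∨ a = c ∨ b = c := by
  grind

lemma exists_forall_eq_or_eq_of_three {α S : Type*} {p : α → Prop} {f : α → S} {x₀ : α}
    (hx₀ : p x₀) (h : ∀ x y z, p x → p y → p z → f x = f y ∨ f x = f z ∨ f y = f z) :
    ∃ s t, ∀ x, p x → f x = s ∨ f x = t := by
  by_contra! hne
  obtain ⟨y, hy, hxy, -⟩ := hne (f x₀) (f x₀)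
  obtain ⟨z, hz, hxz, hyz⟩ := hne (f x₀) (f y)
  rcases h x₀ y z hx₀ hy hz with e | e | e
  exacts [hxy e.symm, hxz e.symm, hyz e.symm]

lemma InvariantZ.eq_of_zsmul_eq_zsmul {A S : Type*} [AddCommGroup A] {f : A → S}
    (hf : InvariantZ f) {m n : ℤ} (hm : m ≠ 0) (hn : n ≠ 0) {x y : A} (h : m • x = n • y) :
    f x = f y := by
  rw [← hf m hm x, h, hf n hn y]

namespace Flag

variable {A I S : Type*} [AddGroup A] [LinearOrder I] {F : I → AddSubgroup A}

def ConstantOnLayers (F : I → AddSubgroup A) (f : A → S) : Prop :=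
  ∀ (i : I) (x y : A), x ∈ F i → (∀ j, i < j → x ∉ F j) →
    y ∈ F i → (∀ j, i < j → y ∉ F j) → f x = f y

def level (hF : Antitone F) (x : A) : LowerSet I :=
  ⟨{i | x ∈ F i}, fun _ _ hij hj => hF hij hj⟩

@[simp]
lemma mem_level (hF : Antitone F) {x : A} {i : I} : i ∈ level hF x ↔ x ∈ F i := Iff.rfl

lemma min_level_le_level_add (hF : Antitone F) (x y : A) :
    min (level hF x) (level hF y) ≤ level hF (x + y) := fun i ⟨hx, hy⟩ =>
  (F i).add_mem hx hy

@[simp]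
lemma level_neg (hF : Antitone F) (x : A) : level hF (-x) = level hF x := by
  ext; simp

lemma level_eq_or_eq_or_eq (hF : Antitone F) {a b c : A} (h : a + b + c = 0) :
    level hF a = level hF b ∨ level hF a = level hF c ∨ level hF b = level hF c := by
  have level_le {x y z : A} (h : x + (y + z) = 0) :
      min (level hF y) (level hF z) ≤ level hF x := by
    rw [eq_neg_of_add_eq_zero_left h, level_neg]
    exact min_level_le_level_add hF y z
  rw [add_assoc] at h
  have h' : b + (c + a) = 0 := by rw [← add_assoc, add_eq_zero_comm, h]
  have h'' : c + (a + b) = 0 := by rw [add_eq_zero_comm, add_assoc, h]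
  exact eq_or_eq_or_eq_of_min_le (level_le h) (level_le h') (level_le h'')

lemma exists_isGreatest_level (hF : StrictAnti F) {u v : A}
    [(AddSubgroup.closure {u, v}).FiniteIndex] (hne : (level hF.antitone u : Set I).Nonempty)
    (hle : level hF.antitone u ≤ level hF.antitone v) :
    ∃ i, IsGreatest (level hF.antitone u : Set I) i := by
  by_contra! hmax
  let L := (level hF.antitone u : Set I)
  have : Nonempty L := hne.to_subtype
  have : NoMaxOrder L := ⟨fun i => by
    obtain ⟨j, hj, hij⟩ : ∃ j ∈ L, i < j := by
      by_contra! h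
      exact hmax i ⟨i.2, h⟩
    exact ⟨⟨j, hj⟩, hij⟩⟩
  obtain ⟨k, hk⟩ := Nat.exists_strictMono L
  refine AddSubgroup.not_strictAnti_of_forall_le (H := AddSubgroup.closure {u, v})
    (G := F ∘ (↑) ∘ k) (fun n => ?_) (hF.comp_strictMono ((Subtype.strictMono_coe _).comp hk))
  rw [AddSubgroup.closure_le, Set.insert_subset_iff, Set.singleton_subset_iff]
  exact ⟨(k n).2, hle (k n).2⟩

lemma eq_of_level_eq {f : A → S} (hF : StrictAnti F) (hconst : ConstantOnLayers F f)
    {u v : A} [(AddSubgroup.closure {u, v}).FiniteIndex]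
    (hne : (level hF.antitone u : Set I).Nonempty)
    (h : level hF.antitone u = level hF.antitone v) : f u = f v := by
  obtain ⟨i, hu, hu_max⟩ := exists_isGreatest_level hF hne h.le
  obtain ⟨hv, hv_max⟩ : IsGreatest (level hF.antitone v : Set I) i := h ▸ ⟨hu, hu_max⟩
  exact hconst i u v hu (fun j hij hj => (hu_max hj).not_gt hij)
    hv (fun j hij hj => (hv_max hj).not_gt hij)

end Flag

def cross (u v : ℤ × ℤ) : ℤ := u.1 * v.2 - u.2 * v.1

lemma cross_comm (u v : ℤ × ℤ) : cross v u = -cross u v := by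
  simp only [cross]; ring

lemma cross_zsmul_zsmul (m n : ℤ) (u v : ℤ × ℤ) :
    cross (m • u) (n • v) = m * n * cross u v := by
  simp only [cross, Prod.smul_fst, Prod.smul_snd, smul_eq_mul]; ring

lemma cross_zsmul_add_zsmul_add_zsmul (x y z : ℤ × ℤ) :
    cross y z • x + cross z x • y + cross x y • z = 0 := by
  ext <;> simp only [cross, Prod.smul_fst, Prod.smul_snd, Prod.fst_add, Prod.snd_add,
    Prod.fst_zero, Prod.snd_zero, smul_eq_mul] <;> ring

lemma cross_zsmul_mem_closure (u v z : ℤ × ℤ) :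
    cross u v • z ∈ AddSubgroup.closure {u, v} := by
  rw [eq_neg_of_add_eq_zero_right (cross_zsmul_add_zsmul_add_zsmul u v z)]
  exact neg_mem (add_mem (AddSubgroup.zsmul_mem _ (AddSubgroup.subset_closure (by simp)) _)
    (AddSubgroup.zsmul_mem _ (AddSubgroup.subset_closure (by simp)) _))

lemma finiteIndex_closure_of_cross_ne_zero {u v : ℤ × ℤ} (h : cross u v ≠ 0) :
    (AddSubgroup.closure {u, v}).FiniteIndex :=
  AddSubgroup.finiteIndex_of_forall_zsmul_mem h (cross_zsmul_mem_closure u v)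

lemma InvariantZ.eq_of_cross_eq_zero {S : Type*} {f : ℤ × ℤ → S} (hf : InvariantZ f)
    {x y : ℤ × ℤ} (hx : x ≠ 0) (hy : y ≠ 0) (h : cross x y = 0) : f x = f y := by
  have of_zsmul_eq {m n : ℤ} (hm : m ≠ 0) (e : m • y = n • x) : f x = f y := by
    have hn : n ≠ 0 := by
      rintro rfl
      exact hy ((smul_eq_zero.mp (e.trans (zero_smul ℤ x))).resolve_left hm)
    exact (hf.eq_of_zsmul_eq_zsmul hm hn e).symm
  unfold cross at h
  by_cases hx₁ : x.1 = 0
  · have hx₂ : x.2 ≠ 0 := fun hx₂ => hx (Prod.ext hx₁ hx₂)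
    refine of_zsmul_eq (n := y.2) hx₂ (Prod.ext ?_ ?_) <;>
      simp only [Prod.smul_fst, Prod.smul_snd, smul_eq_mul]
    exacts [by linear_combination -h, mul_comm _ _]
  · refine of_zsmul_eq (n := y.1) hx₁ (Prod.ext ?_ ?_) <;>
      simp only [Prod.smul_fst, Prod.smul_snd, smul_eq_mul]
    exacts [mul_comm _ _, by linear_combination h]

section FlagOnLattice

variable {I S : Type*} [LinearOrder I] {F : I → AddSubgroup (ℤ × ℤ)} {f : ℤ × ℤ → S}

theorem eq_or_eq_or_eq_of_cross_ne_zero (hinv : InvariantZ f) (hF : StrictAnti F)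
    (hcov : ∀ x, ∃ i, x ∈ F i) (hconst : Flag.ConstantOnLayers F f) {x y z : ℤ × ℤ}
    (hxy : cross x y ≠ 0) (hyz : cross y z ≠ 0) (hzx : cross z x ≠ 0) :
    f x = f y ∨ f x = f z ∨ f y = f z := by
  have of_level_eq {u v : ℤ × ℤ} (huv : cross u v ≠ 0)
      (h : Flag.level hF.antitone u = Flag.level hF.antitone v) : f u = f v :=
    haveI := finiteIndex_closure_of_cross_ne_zero huv
    Flag.eq_of_level_eq hF hconst (hcov u) h
  have hxz : cross x z ≠ 0 := by rwa [cross_comm, neg_ne_zero]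
  have hab : cross (cross y z • x) (cross z x • y) ≠ 0 := by
    rw [cross_zsmul_zsmul]; exact mul_ne_zero (mul_ne_zero hyz hzx) hxy
  have hac : cross (cross y z • x) (cross x y • z) ≠ 0 := by
    rw [cross_zsmul_zsmul]; exact mul_ne_zero (mul_ne_zero hyz hxy) hxz
  have hbc : cross (cross z x • y) (cross x y • z) ≠ 0 := by
    rw [cross_zsmul_zsmul]; exact mul_ne_zero (mul_ne_zero hzx hxy) hyz
  rw [← hinv _ hyz x, ← hinv _ hzx y, ← hinv _ hxy z]
  rcases Flag.level_eq_or_eq_or_eq hF.antitone (cross_zsmul_add_zsmul_add_zsmul x y z)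
    with h | h | h
  exacts [Or.inl (of_level_eq hab h), Or.inr (Or.inl (of_level_eq hac h)),
    Or.inr (Or.inr (of_level_eq hbc h))]

theorem eq_or_eq_or_eq_of_ne_zero (hinv : InvariantZ f) (hF : StrictAnti F)
    (hcov : ∀ x, ∃ i, x ∈ F i) (hconst : Flag.ConstantOnLayers F f) {x y z : ℤ × ℤ}
    (hx : x ≠ 0) (hy : y ≠ 0) (hz : z ≠ 0) : f x = f y ∨ f x = f z ∨ f y = f z := by
  by_cases hxy : cross x y = 0
  · exact Or.inl (hinv.eq_of_cross_eq_zero hx hy hxy)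
  by_cases hyz : cross y z = 0
  · exact Or.inr (Or.inr (hinv.eq_of_cross_eq_zero hy hz hyz))
  by_cases hzx : cross z x = 0
  · exact Or.inr (Or.inl (hinv.eq_of_cross_eq_zero hz hx hzx).symm)
  exact eq_or_eq_or_eq_of_cross_ne_zero hinv hF hcov hconst hxy hyz hzx

end FlagOnLattice

/-- an abelian flag function on a free abelian group of rank 2 takes at most
two distinct values away from `0`. -/
theorem stmt_0 {S : Type*} (f : ℤ × ℤ → S) (hf : IsAF f) :
    ∃ s t : S, ∀ a : ℤ × ℤ, a ≠ 0 → f a = s ∨ f a = t := by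
  obtain ⟨hinv, I, _, F, hcov, hF, hconst⟩ := hf
  exact exists_forall_eq_or_eq_of_three (x₀ := ((1, 0) : ℤ × ℤ)) (by simp)
    fun x y z hx hy hz => eq_or_eq_or_eq_of_ne_zero hinv hF hcov hconst hx hy hz
end

section
/- Let q be a prime and A = (Z/q)² viewed with its projective line P¹(F_q). Let f : A → S be an abelian flag function (invariant under multiplication by integers coprime to q, with a strict filtration by subgroups). Then f, considered as a function on P¹(F_q), is constant on the complement of at most one point of P¹(F_q). -/
/-- Invariance under multiplication by integers coprime to `q`. -/
def InvariantCop {A : Type*} [AddCommGroup A] {S : Type*} (q : ℕ) (f : A → S) : Prop :=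
  ∀ n : ℤ, IsCoprime n (q : ℤ) → ∀ a : A, f (n • a) = f a

/-!
The first step of a strict exhausting filtration of a finite group is the whole group and the
next one is a proper subgroup `B`, so a flag function is constant off `B`. Every subgroup of
`(ℤ/q)²` is an `𝔽_q`-subspace, and a proper subspace of the plane lies on a line through the
origin, i.e. over a single point of `P¹(𝔽_q)`.
-/

theorem StrictAnti.exists_lt_forall_lt_imp_le {I α : Type*} [LinearOrder I] [Finite I]
    [PartialOrder α] [OrderBot α] {F : I → α} (hF : StrictAnti F) {i : I} (hi : ⊥ < F i) :
    ∃ b < F i, ∀ j, i < j → F j ≤ b := by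
  rcases (Set.Ioi i).eq_empty_or_nonempty with hempty | hne
  · exact ⟨⊥, hi, fun j hj => (Set.eq_empty_iff_forall_notMem.1 hempty j hj).elim⟩
  · obtain ⟨j₀, hj₀, hmin⟩ := (Set.toFinite _).exists_minimal hne
    exact ⟨F j₀, hF hj₀, fun j hj => hF.antitone (not_lt.1 fun h => (hmin hj h.le).not_gt h)⟩

theorem HasFlagFiltration.exists_lt_top_forall_notMem_eq {A S : Type*} [AddCommGroup A]
    [Finite A] [Nontrivial A] {f : A → S} (hf : HasFlagFiltration f) :
    ∃ B : AddSubgroup A, B < ⊤ ∧ ∃ s, ∀ x ∉ B, f x = s := by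
  obtain ⟨I, lo, F, hcov, hstrict, hconst⟩ := hf
  have hF : StrictAnti F := fun i j h => hstrict i j h
  have : Finite I := Finite.of_injective F hF.injective
  have : Nonempty I := ⟨(hcov 0).choose⟩
  obtain ⟨i₀, hi₀⟩ := Finite.exists_min (id : I → I)
  have htop : F i₀ = ⊤ := eq_top_iff.2 fun a _ => by
    obtain ⟨i, hi⟩ := hcov a
    exact hF.antitone (hi₀ i) hi
  obtain ⟨B, hB, hFB⟩ := hF.exists_lt_forall_lt_imp_le (htop ▸ bot_lt_top : ⊥ < F i₀)
  rw [htop] at hB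
  obtain ⟨z, -, hz⟩ := SetLike.exists_of_lt hB
  have hmem : ∀ x : A, x ∈ F i₀ := by simp [htop]
  exact ⟨B, hB, f z, fun x hx => hconst i₀ x z (hmem x) (fun j hj hxj => hx (hFB j hj hxj))
    (hmem z) (fun j hj hzj => hz (hFB j hj hzj))⟩

theorem Submodule.exists_forall_mem_eq_smul_of_lt_top {K V : Type*} [Field K] [AddCommGroup V]
    [Module K V] [FiniteDimensional K V] (hV : Module.finrank K V = 2) {W : Submodule K V}
    (hW : W < ⊤) : ∃ v : V, ∀ x ∈ W, ∃ c : K, x = c • v := by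
  have hrank : Module.finrank K W ≤ 1 := by
    have := Submodule.finrank_lt hW.ne
    omega
  obtain ⟨v, hv⟩ := finrank_le_one_iff.1 hrank
  refine ⟨v, fun x hx => ?_⟩
  obtain ⟨c, hc⟩ := hv ⟨x, hx⟩
  exact ⟨c, congrArg Subtype.val hc.symm⟩

theorem stmt_3_general (q : ℕ) (hq : q.Prime) {S : Type*}
    (f : ZMod q × ZMod q → S)
    (hf : InvariantCop q f ∧ HasFlagFiltration f) :
    ∃ (x₀ : ZMod q × ZMod q) (s : S),
      ∀ x : ZMod q × ZMod q, x ≠ 0 → (¬∃ c : ZMod q, x = c • x₀) → f x = s := by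
  have : Fact q.Prime := ⟨hq⟩
  obtain ⟨B, hB, s, hs⟩ := hf.2.exists_lt_top_forall_notMem_eq
  have hW : AddSubgroup.toZModSubmodule q B < ⊤ := by
    simpa only [map_top] using (AddSubgroup.toZModSubmodule q).strictMono hB
  obtain ⟨x₀, hx₀⟩ :=
    Submodule.exists_forall_mem_eq_smul_of_lt_top (by simp) hW
  exact ⟨x₀, s, fun x _ hx => hs x fun hxB => hx (hx₀ x hxB)⟩

/-- an abelian flag function on `(ℤ/q)²` (q an odd prime), viewed on
`P¹(F_q)`, is constant away from at most one point: there is `x₀` such that `f` is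
constant on the nonzero vectors not proportional to `x₀`. -/
theorem stmt_3 (q : ℕ) (hq : q.Prime) (hq2 : q ≠ 2) {S : Type*}
    (f : ZMod q × ZMod q → S)
    (hf : InvariantCop q f ∧ HasFlagFiltration f) :
    ∃ (x₀ : ZMod q × ZMod q) (s : S),
      ∀ x : ZMod q × ZMod q, x ≠ 0 → (¬∃ c : ZMod q, x = c • x₀) → f x = s :=
  stmt_3_general q hq f hf
end

section
/- Let q > 2 be a prime, A = (Z/q)³, and f : A → Z/2 a function such that for every subgroup C ⊆ A with rk(C) ≤ 2 the restriction of f to C is an abelian flag function. Then f is an abelian flag function on A. -/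
/-- Abelian flag function in the `F_q` setting. -/
def IsAFCop {A : Type*} [AddCommGroup A] {S : Type*} (q : ℕ) (f : A → S) : Prop :=
  InvariantCop q f ∧ HasFlagFiltration f


/-- From a flag filtration on a finite nontrivial group, extract a proper subgroup
outside of which `f` is constant. -/
lemma flag_top {G S : Type*} [AddCommGroup G] [Finite G] [Nontrivial G] {f : G → S}
    (h : HasFlagFiltration f) :
    ∃ H : AddSubgroup G, H ≠ ⊤ ∧ ∀ x y : G, x ∉ H → y ∉ H → f x = f y := by
  obtain ⟨I, lo, F, hcov, hanti, hconst⟩ := h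
  letI := lo
  have hFinj : Function.Injective F := by
    intro i j hij
    rcases lt_trichotomy i j with h | h | h
    · exact absurd (hanti i j h) (by rw [hij]; exact lt_irrefl _)
    · exact h
    · exact absurd (hanti j i h) (by rw [hij]; exact lt_irrefl _)
  haveI : Finite (AddSubgroup G) := Finite.of_injective (fun H : AddSubgroup G => (H : Set G))
    SetLike.coe_injective
  haveI : Finite I := Finite.of_injective F hFinj
  haveI : Fintype I := Fintype.ofFinite I
  obtain ⟨i0', hi0'⟩ := hcov 0
  have hne : (Finset.univ : Finset I).Nonempty := ⟨i0', Finset.mem_univ _⟩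
  set m := Finset.univ.min' hne with hm
  have hm_top : ∀ x : G, x ∈ F m := by
    intro x
    obtain ⟨i, hi⟩ := hcov x
    rcases (Finset.min'_le Finset.univ i (Finset.mem_univ i)).eq_or_lt with h | h
    · have hmi : m = i := h
      rw [hmi]; exact hi
    · exact le_of_lt (hanti m i h) hi
  by_cases hJ : ∃ j, m < j
  · obtain ⟨j0, hj0⟩ := hJ
    have hJne : (Finset.univ.filter (fun j => m < j)).Nonempty :=
      ⟨j0, by simp [hj0]⟩
    set j1 := (Finset.univ.filter (fun j => m < j)).min' hJne with hj1
    have hj1m : m < j1 := by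
      have h := Finset.mem_filter.mp (Finset.min'_mem (Finset.univ.filter (fun j => m < j)) hJne)
      exact h.2
    refine ⟨F j1, ?_, ?_⟩
    · intro htop
      have hlt := hanti m j1 hj1m
      rw [htop] at hlt
      exact not_top_lt hlt
    · intro x y hx hy
      have key : ∀ z : G, z ∉ F j1 → ∀ j : I, m < j → z ∉ F j := by
        intro z hz j hmj hzj
        have hle : j1 ≤ j := Finset.min'_le _ j (by simp [hmj])
        rcases hle.eq_or_lt with h | h
        · rw [← h] at hzj; exact hz hzj
        · exact hz (le_of_lt (hanti j1 j h) hzj)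
      exact hconst m x y (hm_top x) (key x hx) (hm_top y) (key y hy)
  · refine ⟨⊥, bot_ne_top, fun x y _ _ => ?_⟩
    exact hconst m x y (hm_top x) (fun j hj _ => hJ ⟨j, hj⟩) (hm_top y)
      (fun j hj _ => hJ ⟨j, hj⟩)


noncomputable def ee (q : ℕ) (i : Fin 3) : Fin 3 → ZMod q := Pi.single i 1

/-- direction of a vector w.r.t. coordinates 1,2 -/
noncomputable def dir {q : ℕ} (a : Fin 3 → ZMod q) : Option (ZMod q) :=
  if a 2 = 0 then none else some (a 1 * (a 2)⁻¹)

/-- representative vector of a direction -/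
noncomputable def vd (q : ℕ) : Option (ZMod q) → (Fin 3 → ZMod q)
  | none => ee q 1
  | some c => c • ee q 1 + ee q 2

variable {q : ℕ}

lemma ee_apply (i j : Fin 3) : ee q i j = if j = i then 1 else 0 := by
  simp [ee, Pi.single_apply]

@[simp] lemma vd_zero (d : Option (ZMod q)) : vd q d 0 = 0 := by
  cases d <;> simp [vd, ee_apply]

@[simp] lemma vd_none_1 : vd q none 1 = 1 := by simp [vd, ee_apply]
@[simp] lemma vd_none_2 : vd q none 2 = 0 := by simp [vd, ee_apply]
@[simp] lemma vd_some_1 (c : ZMod q) : vd q (some c) 1 = c := by simp [vd, ee_apply]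
@[simp] lemma vd_some_2 (c : ZMod q) : vd q (some c) 2 = 1 := by simp [vd, ee_apply]

variable [Fact q.Prime]

lemma vd_ne_zero (d : Option (ZMod q)) : vd q d ≠ 0 := by
  intro h
  cases d with
  | none => have := congrFun h 1; rw [vd_none_1] at this; simp at this
  | some c => have := congrFun h 2; rw [vd_some_2] at this; simp at this

lemma ee0_ne_zero : (ee q 0) ≠ 0 := by
  intro h
  have := congrFun h 0
  rw [ee_apply] at this
  simp at this

lemma dir_vd (d : Option (ZMod q)) : dir (vd q d) = d := by
  cases d with
  | none => simp [dir]
  | some c => simp [dir]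

lemma vd_not_mem_span {d d' : Option (ZMod q)} (h : d ≠ d') :
    vd q d' ∉ Submodule.span (ZMod q) ({vd q d} : Set (Fin 3 → ZMod q)) := by
  intro hmem
  rw [Submodule.mem_span_singleton] at hmem
  obtain ⟨c, hc⟩ := hmem
  have h1 := congrFun hc 1
  have h2 := congrFun hc 2
  rw [Pi.smul_apply, smul_eq_mul] at h1
  rw [Pi.smul_apply, smul_eq_mul] at h2
  cases d with
  | none => cases d' with
    | none => exact h rfl
    | some c' => simp at h2
  | some c1 => cases d' with
    | none => simp at h2; rw [h2] at h1; simp at h1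
    | some c2 =>
      simp at h2
      rw [h2, one_mul] at h1
      simp only [vd_some_1] at h1
      exact h (by rw [h1])

/-- decomposition of a vector not in the span of `ee 0` -/
lemma decomp (a : Fin 3 → ZMod q) (h : ¬(a 1 = 0 ∧ a 2 = 0)) :
    ∃ t : ZMod q, t ≠ 0 ∧ a 0 • ee q 0 + t • vd q (dir a) = a := by
  by_cases h2 : a 2 = 0
  · have h1 : a 1 ≠ 0 := fun h1 => h ⟨h1, h2⟩
    refine ⟨a 1, h1, ?_⟩
    have hd : dir a = (none : Option (ZMod q)) := by simp [dir, h2]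
    rw [hd]
    funext i
    fin_cases i <;> simp [vd, ee_apply] <;> simp [h2]
  · refine ⟨a 2, h2, ?_⟩
    have hd : dir a = some (a 1 * (a 2)⁻¹) := by simp [dir, h2]
    rw [hd]
    funext i
    fin_cases i <;> simp [vd, ee_apply]
    rw [mul_comm, mul_assoc, inv_mul_cancel₀ h2, mul_one]

/-- Any additive subgroup of a `ZMod q`-module is a `ZMod q`-submodule. -/
def toMod {q : ℕ} [NeZero q] (H : AddSubgroup (Fin 3 → ZMod q)) :
    Submodule (ZMod q) (Fin 3 → ZMod q) where
  carrier := H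
  add_mem' := H.add_mem
  zero_mem' := H.zero_mem
  smul_mem' := by
    intro c x hx
    have h1 : ((c.val : ℕ) : ZMod q) = c := by
      rw [ZMod.natCast_val, ZMod.cast_id]
    have : c • x = (c.val : ℕ) • x := by
      conv_lhs => rw [← h1]
      rw [Nat.cast_smul_eq_nsmul]
    rw [this]
    exact AddSubgroup.nsmul_mem H hx _

@[simp] lemma mem_toMod {q : ℕ} [NeZero q] {H : AddSubgroup (Fin 3 → ZMod q)}
    {x : Fin 3 → ZMod q} : x ∈ toMod H ↔ x ∈ H := Iff.rfl

lemma closure_eq_span {q : ℕ} [NeZero q] (s : Set (Fin 3 → ZMod q)) :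
    (AddSubgroup.closure s : Set (Fin 3 → ZMod q)) =
      (Submodule.span (ZMod q) s : Set (Fin 3 → ZMod q)) := by
  apply Set.Subset.antisymm
  · intro x hx
    have : AddSubgroup.closure s ≤ (Submodule.span (ZMod q) s).toAddSubgroup :=
      AddSubgroup.closure_le _ |>.mpr Submodule.subset_span
    exact this hx
  · intro x hx
    have : Submodule.span (ZMod q) s ≤ toMod (AddSubgroup.closure s) :=
      Submodule.span_le.mpr AddSubgroup.subset_closure
    exact this hx

lemma pair_in {q : ℕ} [Fact q.Prime] {x y a b : Fin 3 → ZMod q}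
    {L : Submodule (ZMod q) (Fin 3 → ZMod q)}
    (hL : L < Submodule.span (ZMod q) {x, y})
    (ha : a ∈ L) (hb : b ∈ L) (ha0 : a ≠ 0)
    (hba : b ∉ Submodule.span (ZMod q) {a}) : False := by
  have hli : LinearIndependent (ZMod q) ![b, a] := by
    rw [show (![b, a] : Fin 2 → Fin 3 → ZMod q) = Fin.cons b ![a] from rfl,
      linearIndependent_fin_cons]
    constructor
    · rw [show (![a] : Fin 1 → Fin 3 → ZMod q) = Fin.cons a ![] from rfl,
        linearIndependent_fin_cons]
      refine ⟨linearIndependent_empty_type, ?_⟩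
      simp [ha0]
    · have : Set.range ![a] = {a} := by
        ext u; simp [Fin.exists_fin_one]
      rwa [this]
  have hrange : Set.range ![b, a] = {b, a} := by
    ext u
    constructor
    · rintro ⟨i, rfl⟩; fin_cases i <;> simp
    · rintro (rfl | rfl)
      · exact ⟨0, rfl⟩
      · exact ⟨1, rfl⟩
  have h2 : Module.finrank (ZMod q) (Submodule.span (ZMod q) {b, a}) = 2 := by
    rw [← hrange]
    rw [finrank_span_eq_card hli]
    simp
  have hba' : Submodule.span (ZMod q) {b, a} ≤ L :=
    Submodule.span_le.mpr (by rintro u (rfl | rfl) <;> assumption)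
  have hfin1 : (2 : ℕ) ≤ Module.finrank (ZMod q) L := h2 ▸ Submodule.finrank_mono hba'
  have hfin2 : Module.finrank (ZMod q) L <
      Module.finrank (ZMod q) (Submodule.span (ZMod q) ({x, y} : Set (Fin 3 → ZMod q))) :=
    Submodule.finrank_lt_finrank_of_lt hL
  have hfin3 : Module.finrank (ZMod q)
      (Submodule.span (ZMod q) ({x, y} : Set (Fin 3 → ZMod q))) ≤ 2 := by
    have h := finrank_span_le_card (R := ZMod q) ({x, y} : Set (Fin 3 → ZMod q))
    refine h.trans ?_
    have hsub : ({x, y} : Set (Fin 3 → ZMod q)).toFinset ⊆ {x, y} := by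
      intro u hu
      simp only [Set.toFinset_insert, Set.toFinset_singleton] at hu
      exact hu
    exact (Finset.card_le_card hsub).trans ((Finset.card_insert_le _ _).trans (by simp))
  omega

lemma core' {q : ℕ} [Fact q.Prime] (hq2 : 2 < q)
    (g : (Fin 3 → ZMod q) → ZMod 2) (w : ZMod 2)
    (inv : ∀ (c : ZMod q) (a : Fin 3 → ZMod q), c ≠ 0 → g (c • a) = g a)
    (mono : ∀ x y : Fin 3 → ZMod q, x ≠ 0 →
      ∃ L : Submodule (ZMod q) (Fin 3 → ZMod q), L < Submodule.span (ZMod q) {x, y} ∧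
        ∀ u v : Fin 3 → ZMod q, u ∈ Submodule.span (ZMod q) ({x, y} : Set (Fin 3 → ZMod q)) → u ∉ L →
          v ∈ Submodule.span (ZMod q) ({x, y} : Set (Fin 3 → ZMod q)) → v ∉ L → g u = g v)
    (LC : Submodule (ZMod q) (Fin 3 → ZMod q))
    (hLC : LC < Submodule.span (ZMod q) {ee q 1, ee q 2})
    (hS : ∀ u ∈ Submodule.span (ZMod q) ({ee q 1, ee q 2} : Set (Fin 3 → ZMod q)), u ∉ LC → g u = w)
    (hz : g (ee q 0) = w) :
    (Finset.univ.filter (fun a : Fin 3 → ZMod q => a ≠ 0 ∧ g a ≠ w)).card ≤ 2 * (q * (q - 1)) := by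
  haveI : NeZero q := ⟨(Fact.out : q.Prime).pos.ne'⟩
  set W := Finset.univ.filter (fun a : Fin 3 → ZMod q => a ≠ 0 ∧ g a ≠ w) with hW
  have hmemW : ∀ a, a ∈ W ↔ (a ≠ 0 ∧ g a ≠ w) := by intro a; simp [hW]
  have hWaxis : ∀ a ∈ W, ¬(a 1 = 0 ∧ a 2 = 0) := by
    rintro a haW ⟨h1, h2⟩
    rw [hmemW] at haW
    have ha0 : a 0 ≠ 0 := by
      intro h0; apply haW.1; funext i; fin_cases i <;> assumption
    have hform : a = a 0 • ee q 0 := by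
      funext i; fin_cases i <;> simp [ee_apply] <;> assumption
    exact haW.2 (by rw [hform, inv _ _ ha0, hz])
  have hvdC : ∀ d : Option (ZMod q),
      vd q d ∈ Submodule.span (ZMod q) ({ee q 1, ee q 2} : Set (Fin 3 → ZMod q)) := by
    intro d
    cases d with
    | none => exact Submodule.subset_span (Set.mem_insert _ _)
    | some c =>
      exact Submodule.add_mem _
        (Submodule.smul_mem _ _ (Submodule.subset_span (Set.mem_insert _ _)))
        (Submodule.subset_span (Set.mem_insert_of_mem _ rfl))
  have hWspan : ∀ a ∈ W,
      a ∈ Submodule.span (ZMod q) ({ee q 0, vd q (dir a)} : Set (Fin 3 → ZMod q)) := by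
    intro a haW
    obtain ⟨t, ht, hta⟩ := decomp a (hWaxis a haW)
    rw [Submodule.mem_span_pair]
    exact ⟨a 0, t, hta⟩
  have hgood : ∀ d : Option (ZMod q), vd q d ∉ LC →
      (W.filter (fun a => dir a = d)).card ≤ q - 1 := by
    intro d hd
    by_cases hWd : (W.filter (fun a => dir a = d)).Nonempty
    · obtain ⟨a, haWd⟩ := hWd
      rw [Finset.mem_filter] at haWd
      obtain ⟨haW, had⟩ := haWd
      obtain ⟨L, hL, hmono⟩ := mono (ee q 0) (vd q d) ee0_ne_zero
      have hnotboth : ¬(ee q 0 ∈ L ∧ vd q d ∈ L) := by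
        rintro ⟨he, hv⟩
        refine hL.ne (le_antisymm hL.le (Submodule.span_le.mpr ?_))
        rintro u (rfl | rfl)
        · exact he
        · exact hv
      have hval : ∀ u, u ∈ Submodule.span (ZMod q) ({ee q 0, vd q d} : Set (Fin 3 → ZMod q)) →
          u ∉ L → g u = w := by
        intro u hu hunL
        by_cases he : ee q 0 ∈ L
        · have hv : vd q d ∉ L := fun hv => hnotboth ⟨he, hv⟩
          exact (hmono u (vd q d) hu hunL
            (Submodule.subset_span (Set.mem_insert_of_mem _ rfl)) hv).trans (hS _ (hvdC d) hd)
        · exact (hmono u (ee q 0) hu hunL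
            (Submodule.subset_span (Set.mem_insert _ _)) he).trans hz
      have hbL : ∀ b, b ∈ W.filter (fun a => dir a = d) → b ∈ L := by
        intro b hb
        rw [Finset.mem_filter] at hb
        have hbspan := hWspan b hb.1
        rw [hb.2] at hbspan
        by_contra hbnL
        exact ((hmemW b).mp hb.1).2 (hval b hbspan hbnL)
      have haL : a ∈ L := hbL a (by rw [Finset.mem_filter]; exact ⟨haW, had⟩)
      have ha0 : a ≠ 0 := ((hmemW a).mp haW).1
      have hsub : W.filter (fun a => dir a = d) ⊆
          (Finset.univ.image (fun c : ZMod q => c • a)).erase 0 := by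
        intro b hb
        have hbL' := hbL b hb
        have hb0 : b ≠ 0 := ((hmemW b).mp (Finset.mem_filter.mp hb).1).1
        have hbspan : b ∈ Submodule.span (ZMod q) ({a} : Set (Fin 3 → ZMod q)) := by
          by_contra hbs
          exact pair_in hL haL hbL' ha0 hbs
        rw [Submodule.mem_span_singleton] at hbspan
        obtain ⟨c, rfl⟩ := hbspan
        exact Finset.mem_erase.mpr ⟨hb0, Finset.mem_image.mpr ⟨c, Finset.mem_univ c, rfl⟩⟩
      refine (Finset.card_le_card hsub).trans ?_
      have h1 : ((Finset.univ.image (fun c : ZMod q => c • a))).card ≤ q := by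
        refine (Finset.card_image_le).trans ?_
        simp [ZMod.card]
      have h0mem : (0 : Fin 3 → ZMod q) ∈ Finset.univ.image (fun c : ZMod q => c • a) :=
        Finset.mem_image.mpr ⟨0, Finset.mem_univ _, zero_smul _ _⟩
      rw [Finset.card_erase_of_mem h0mem]
      omega
    · rw [Finset.not_nonempty_iff_eq_empty] at hWd
      rw [hWd]
      simp
  have hgen : ∀ d : Option (ZMod q), (W.filter (fun a => dir a = d)).card ≤ (q - 1) * q := by
    intro d
    have hsub : W.filter (fun a => dir a = d) ⊆
        ((Finset.univ.erase (0 : ZMod q)) ×ˢ (Finset.univ : Finset (ZMod q))).image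
          (fun p : ZMod q × ZMod q => p.2 • ee q 0 + p.1 • vd q d) := by
      intro b hb
      rw [Finset.mem_filter] at hb
      obtain ⟨t, ht, htb⟩ := decomp b (hWaxis b hb.1)
      refine Finset.mem_image.mpr ⟨(t, b 0), ?_, ?_⟩
      · exact Finset.mem_product.mpr
          ⟨Finset.mem_erase.mpr ⟨ht, Finset.mem_univ _⟩, Finset.mem_univ _⟩
      · rw [← hb.2]; exact htb
    refine (Finset.card_le_card hsub).trans ?_
    refine Finset.card_image_le.trans ?_
    rw [Finset.card_product, Finset.card_erase_of_mem (Finset.mem_univ _)]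
    simp [ZMod.card]
  have hsum : W.card = ∑ d : Option (ZMod q), (W.filter (fun a => dir a = d)).card :=
    Finset.card_eq_sum_card_fiberwise (fun x _ => Finset.mem_univ _)
  have hcard_univ : (Finset.univ : Finset (Option (ZMod q))).card = q + 1 := by
    rw [Finset.card_univ, Fintype.card_option, ZMod.card]
  by_cases hbad : ∃ d : Option (ZMod q), vd q d ∈ LC
  · obtain ⟨d0, hd0⟩ := hbad
    have huniq : ∀ d, d ≠ d0 → vd q d ∉ LC := by
      intro d hd hdLC
      exact pair_in hLC hdLC hd0 (vd_ne_zero d) (vd_not_mem_span hd)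
    rw [hsum, ← Finset.add_sum_erase _ _ (Finset.mem_univ d0)]
    have h2 : ∑ d ∈ Finset.univ.erase d0, (W.filter (fun a => dir a = d)).card ≤
        ∑ _d ∈ Finset.univ.erase d0, (q - 1) :=
      Finset.sum_le_sum (fun d hd => hgood d (huniq d (Finset.mem_erase.mp hd).1))
    have h3 : ∑ _d ∈ Finset.univ.erase d0, (q - 1) = q * (q - 1) := by
      rw [Finset.sum_const, Finset.card_erase_of_mem (Finset.mem_univ _), hcard_univ]
      simp [Nat.add_sub_cancel, smul_eq_mul]
    have := add_le_add (hgen d0) (h2.trans h3.le)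
    refine this.trans ?_
    have hq1 : 1 ≤ q := le_of_lt (lt_trans one_lt_two hq2)
    nlinarith [Nat.sub_le q 1]
  · push_neg at hbad
    rw [hsum]
    have h2 : ∑ d : Option (ZMod q), (W.filter (fun a => dir a = d)).card ≤
        ∑ _d : Option (ZMod q), (q - 1) :=
      Finset.sum_le_sum (fun d _ => hgood d (hbad d))
    refine h2.trans ?_
    rw [Finset.sum_const, hcard_univ, smul_eq_mul]
    have hq1 : 1 ≤ q := le_of_lt (lt_trans one_lt_two hq2)
    nlinarith [Nat.sub_le q 1]

lemma core {q : ℕ} [Fact q.Prime] (hq2 : 2 < q)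
    (f : (Fin 3 → ZMod q) → ZMod 2) (w : ZMod 2)
    (inv : ∀ (c : ZMod q) (a : Fin 3 → ZMod q), c ≠ 0 → f (c • a) = f a)
    (mono : ∀ x y : Fin 3 → ZMod q, x ≠ 0 →
      ∃ L : Submodule (ZMod q) (Fin 3 → ZMod q), L < Submodule.span (ZMod q) {x, y} ∧
        ∀ u v : Fin 3 → ZMod q, u ∈ Submodule.span (ZMod q) ({x, y} : Set (Fin 3 → ZMod q)) → u ∉ L →
          v ∈ Submodule.span (ZMod q) ({x, y} : Set (Fin 3 → ZMod q)) → v ∉ L → f u = f v)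
    (p1 p2 z : Fin 3 → ZMod q)
    (hp2 : p2 ≠ 0) (hp1 : p1 ∉ Submodule.span (ZMod q) ({p2} : Set (Fin 3 → ZMod q)))
    (hzs : z ∉ Submodule.span (ZMod q) ({p1, p2} : Set (Fin 3 → ZMod q)))
    (LC : Submodule (ZMod q) (Fin 3 → ZMod q))
    (hLC : LC < Submodule.span (ZMod q) {p1, p2})
    (hS : ∀ u ∈ Submodule.span (ZMod q) ({p1, p2} : Set (Fin 3 → ZMod q)), u ∉ LC → f u = w)
    (hzv : f z = w) :
    (Finset.univ.filter (fun a : Fin 3 → ZMod q => a ≠ 0 ∧ f a ≠ w)).card ≤ 2 * (q * (q - 1)) := by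
  classical
  -- linear independence of (z, p1, p2)
  have hrange2 : Set.range ![p1, p2] = {p1, p2} := by
    ext u
    constructor
    · rintro ⟨i, rfl⟩; fin_cases i <;> simp
    · rintro (rfl | rfl)
      · exact ⟨0, rfl⟩
      · exact ⟨1, rfl⟩
  have hli : LinearIndependent (ZMod q) ![z, p1, p2] := by
    rw [show (![z, p1, p2] : Fin 3 → Fin 3 → ZMod q) = Fin.cons z ![p1, p2] from rfl,
      linearIndependent_fin_cons]
    constructor
    · rw [show (![p1, p2] : Fin 2 → Fin 3 → ZMod q) = Fin.cons p1 ![p2] from rfl,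
        linearIndependent_fin_cons]
      constructor
      · rw [show (![p2] : Fin 1 → Fin 3 → ZMod q) = Fin.cons p2 ![] from rfl,
          linearIndependent_fin_cons]
        refine ⟨linearIndependent_empty_type, ?_⟩
        simp [hp2]
      · have h1 : Set.range ![p2] = {p2} := by ext u; simp [Fin.exists_fin_one]
        rwa [h1]
    · rwa [hrange2]
  have hcard : Fintype.card (Fin 3) = Module.finrank (ZMod q) (Fin 3 → ZMod q) := by
    rw [Module.finrank_fin_fun, Fintype.card_fin]
  let b : Module.Basis (Fin 3) (ZMod q) (Fin 3 → ZMod q) :=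
    basisOfLinearIndependentOfCardEqFinrank hli hcard
  have hb : ⇑b = ![z, p1, p2] := coe_basisOfLinearIndependentOfCardEqFinrank hli hcard
  let T : (Fin 3 → ZMod q) ≃ₗ[ZMod q] (Fin 3 → ZMod q) := b.equivFun.symm
  have hTe : ∀ i : Fin 3, T (ee q i) = b i := by
    intro i
    show b.equivFun.symm (ee q i) = b i
    rw [Module.Basis.equivFun_symm_apply]
    rw [Finset.sum_eq_single i]
    · rw [ee_apply, if_pos rfl, one_smul]
    · intro j _ hj
      rw [ee_apply, if_neg hj, zero_smul]
    · intro hi; exact absurd (Finset.mem_univ i) hi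
  have hT0 : T (ee q 0) = z := by rw [hTe 0, hb]; rfl
  have hT1 : T (ee q 1) = p1 := by rw [hTe 1, hb]; rfl
  have hT2 : T (ee q 2) = p2 := by rw [hTe 2, hb]; rfl
  set g : (Fin 3 → ZMod q) → ZMod 2 := fun a => f (T a) with hg
  -- transported span equality
  have hspan_pair : ∀ x y : Fin 3 → ZMod q,
      Submodule.map ((T.symm : (Fin 3 → ZMod q) ≃ₗ[ZMod q] (Fin 3 → ZMod q)) : (Fin 3 → ZMod q) →ₗ[ZMod q] (Fin 3 → ZMod q))
        (Submodule.span (ZMod q) ({T x, T y} : Set (Fin 3 → ZMod q))) =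
      Submodule.span (ZMod q) ({x, y} : Set (Fin 3 → ZMod q)) := by
    intro x y
    rw [Submodule.map_span, Set.image_pair]
    simp only [LinearEquiv.coe_coe, LinearEquiv.symm_apply_apply]
  have hmem_map : ∀ (P : Submodule (ZMod q) (Fin 3 → ZMod q)) (u : Fin 3 → ZMod q),
      u ∈ Submodule.map ((T.symm : (Fin 3 → ZMod q) ≃ₗ[ZMod q] (Fin 3 → ZMod q)) : (Fin 3 → ZMod q) →ₗ[ZMod q] (Fin 3 → ZMod q)) P ↔ T u ∈ P := by
    intro P u
    constructor
    · rintro ⟨v, hv, rfl⟩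
      simpa using hv
    · intro h
      exact ⟨T u, h, by simp⟩
  have hlt_map : ∀ (P Q : Submodule (ZMod q) (Fin 3 → ZMod q)), P < Q →
      Submodule.map ((T.symm : (Fin 3 → ZMod q) ≃ₗ[ZMod q] (Fin 3 → ZMod q)) : (Fin 3 → ZMod q) →ₗ[ZMod q] (Fin 3 → ZMod q)) P <
      Submodule.map ((T.symm : (Fin 3 → ZMod q) ≃ₗ[ZMod q] (Fin 3 → ZMod q)) : (Fin 3 → ZMod q) →ₗ[ZMod q] (Fin 3 → ZMod q)) Q := by
    intro P Q hPQ
    have := (Submodule.orderIsoMapComap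
      (T.symm : (Fin 3 → ZMod q) ≃ₗ[ZMod q] (Fin 3 → ZMod q))).lt_iff_lt.mpr hPQ
    exact this
  -- core' hypotheses for g
  have inv' : ∀ (c : ZMod q) (a : Fin 3 → ZMod q), c ≠ 0 → g (c • a) = g a := by
    intro c a hc
    rw [hg]
    simp only [map_smul]
    exact inv c (T a) hc
  have mono' : ∀ x y : Fin 3 → ZMod q, x ≠ 0 →
      ∃ L : Submodule (ZMod q) (Fin 3 → ZMod q), L < Submodule.span (ZMod q) {x, y} ∧
        ∀ u v : Fin 3 → ZMod q, u ∈ Submodule.span (ZMod q) ({x, y} : Set (Fin 3 → ZMod q)) → u ∉ L →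
          v ∈ Submodule.span (ZMod q) ({x, y} : Set (Fin 3 → ZMod q)) → v ∉ L → g u = g v := by
    intro x y hx0
    have hTx0 : T x ≠ 0 := fun h => hx0 ((LinearEquiv.map_eq_zero_iff T).mp h)
    obtain ⟨L, hL, hm⟩ := mono (T x) (T y) hTx0
    refine ⟨Submodule.map ((T.symm : (Fin 3 → ZMod q) ≃ₗ[ZMod q] (Fin 3 → ZMod q)) : (Fin 3 → ZMod q) →ₗ[ZMod q] (Fin 3 → ZMod q)) L, ?_, ?_⟩
    · have := hlt_map L _ hL
      rwa [hspan_pair x y] at this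
    · intro u v hu hunL hv hvnL
      rw [← hspan_pair x y, hmem_map] at hu hv
      rw [hmem_map] at hunL hvnL
      exact hm (T u) (T v) hu hunL hv hvnL
  have hspan12 : Submodule.map ((T.symm : (Fin 3 → ZMod q) ≃ₗ[ZMod q] (Fin 3 → ZMod q)) : (Fin 3 → ZMod q) →ₗ[ZMod q] (Fin 3 → ZMod q))
      (Submodule.span (ZMod q) ({p1, p2} : Set (Fin 3 → ZMod q))) =
      Submodule.span (ZMod q) ({ee q 1, ee q 2} : Set (Fin 3 → ZMod q)) := by
    have h := hspan_pair (ee q 1) (ee q 2)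
    rw [hT1, hT2] at h
    exact h
  have hLC' := hlt_map LC _ hLC
  rw [hspan12] at hLC'
  have hS' : ∀ u ∈ Submodule.span (ZMod q) ({ee q 1, ee q 2} : Set (Fin 3 → ZMod q)),
      u ∉ Submodule.map ((T.symm : (Fin 3 → ZMod q) ≃ₗ[ZMod q] (Fin 3 → ZMod q)) : (Fin 3 → ZMod q) →ₗ[ZMod q] (Fin 3 → ZMod q)) LC → g u = w := by
    intro u hu hunL
    rw [← hspan12, hmem_map] at hu
    rw [hmem_map] at hunL
    exact hS (T u) hu hunL
  have hz' : g (ee q 0) = w := by rw [hg]; simp only; rw [hT0]; exact hzv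
  have hcore := core' hq2 g w inv' mono' _ hLC' hS' hz'
  have hcards : (Finset.univ.filter (fun a : Fin 3 → ZMod q => a ≠ 0 ∧ f a ≠ w)).card =
      (Finset.univ.filter (fun a : Fin 3 → ZMod q => a ≠ 0 ∧ g a ≠ w)).card := by
    apply Finset.card_bij' (fun a _ => T.symm a) (fun a _ => T a)
    · intro a ha
      rw [Finset.mem_filter] at ha ⊢
      refine ⟨Finset.mem_univ _, ?_, ?_⟩
      · exact fun h => ha.2.1 ((LinearEquiv.map_eq_zero_iff T.symm).mp h)
      · rw [hg]; simp only [LinearEquiv.apply_symm_apply]; exact ha.2.2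
    · intro a ha
      rw [Finset.mem_filter] at ha ⊢
      refine ⟨Finset.mem_univ _, ?_, ?_⟩
      · exact fun h => ha.2.1 ((LinearEquiv.map_eq_zero_iff T).mp h)
      · exact ha.2.2
    · intro a _; exact LinearEquiv.apply_symm_apply T a
    · intro a _; exact LinearEquiv.symm_apply_apply T a
  rw [hcards]
  exact hcore

lemma span_pair_finrank {q : ℕ} [Fact q.Prime] (x y : Fin 3 → ZMod q) :
    Module.finrank (ZMod q) (Submodule.span (ZMod q) ({x, y} : Set (Fin 3 → ZMod q))) ≤ 2 := by
  have h := finrank_span_le_card (R := ZMod q) ({x, y} : Set (Fin 3 → ZMod q))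
  refine h.trans ?_
  have hsub : ({x, y} : Set (Fin 3 → ZMod q)).toFinset ⊆ {x, y} := by
    intro u hu
    simp only [Set.toFinset_insert, Set.toFinset_singleton] at hu
    exact hu
  exact (Finset.card_le_card hsub).trans ((Finset.card_insert_le _ _).trans (by simp))

lemma span_pair_ne_top {q : ℕ} [Fact q.Prime] (x y : Fin 3 → ZMod q) :
    Submodule.span (ZMod q) ({x, y} : Set (Fin 3 → ZMod q)) ≠ ⊤ := by
  intro h
  have h2 := span_pair_finrank x y
  rw [h, finrank_top, Module.finrank_fin_fun] at h2
  omega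

lemma toAdd_lt {q : ℕ} {P Q : Submodule (ZMod q) (Fin 3 → ZMod q)} (h : P < Q) :
    P.toAddSubgroup < Q.toAddSubgroup := by
  obtain ⟨hle, u, huQ, huP⟩ := SetLike.lt_iff_le_and_exists.mp h
  refine SetLike.lt_iff_le_and_exists.mpr ⟨?_, u, ?_, ?_⟩
  · intro a ha
    exact hle ha
  · exact huQ
  · exact huP

lemma flag_chain3 {A S : Type*} [AddCommGroup A] (f : A → S) (G1 G2 : AddSubgroup A)
    (h01 : G1 < ⊤) (h12 : G2 < G1)
    (c0 : ∀ x y : A, x ∉ G1 → y ∉ G1 → f x = f y)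
    (c1 : ∀ x y : A, x ∈ G1 → x ∉ G2 → y ∈ G1 → y ∉ G2 → f x = f y)
    (c2 : ∀ x y : A, x ∈ G2 → y ∈ G2 → f x = f y) : HasFlagFiltration f := by
  refine ⟨Fin 3, inferInstance,
    (fun i : Fin 3 => match i with | ⟨0, _⟩ => ⊤ | ⟨1, _⟩ => G1 | ⟨2, _⟩ => G2), ?_, ?_, ?_⟩
  · intro a; exact ⟨0, AddSubgroup.mem_top a⟩
  · intro i j hij
    fin_cases i <;> fin_cases j <;>
      first
        | exact absurd hij (by decide)
        | exact h01
        | exact h12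
        | exact lt_trans h12 h01
  · intro i x y hxi hxj hyi hyj
    fin_cases i
    · exact c0 x y (hxj 1 (by decide)) (hyj 1 (by decide))
    · exact c1 x y hxi (hxj 2 (by decide)) hyi (hyj 2 (by decide))
    · exact c2 x y hxi hyi

lemma flag_chain4 {A S : Type*} [AddCommGroup A] (f : A → S) (G1 G2 G3 : AddSubgroup A)
    (h01 : G1 < ⊤) (h12 : G2 < G1) (h23 : G3 < G2)
    (c0 : ∀ x y : A, x ∉ G1 → y ∉ G1 → f x = f y)
    (c1 : ∀ x y : A, x ∈ G1 → x ∉ G2 → y ∈ G1 → y ∉ G2 → f x = f y)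
    (c2 : ∀ x y : A, x ∈ G2 → x ∉ G3 → y ∈ G2 → y ∉ G3 → f x = f y)
    (c3 : ∀ x y : A, x ∈ G3 → y ∈ G3 → f x = f y) : HasFlagFiltration f := by
  refine ⟨Fin 4, inferInstance,
    (fun i : Fin 4 => match i with | ⟨0, _⟩ => ⊤ | ⟨1, _⟩ => G1 | ⟨2, _⟩ => G2 | ⟨3, _⟩ => G3),
    ?_, ?_, ?_⟩
  · intro a; exact ⟨0, AddSubgroup.mem_top a⟩
  · intro i j hij
    fin_cases i <;> fin_cases j <;>
      first
        | exact absurd hij (by decide)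
        | exact h01
        | exact h12
        | exact h23
        | exact lt_trans h12 h01
        | exact lt_trans h23 h12
        | exact lt_trans h23 (lt_trans h12 h01)
  · intro i x y hxi hxj hyi hyj
    fin_cases i
    · exact c0 x y (hxj 1 (by decide)) (hyj 1 (by decide))
    · exact c1 x y hxi (hxj 2 (by decide)) hyi (hyj 2 (by decide))
    · exact c2 x y hxi (hxj 3 (by decide)) hyi (hyj 3 (by decide))
    · exact c3 x y hxi hyi

lemma ee_ne_zero {q : ℕ} [Fact q.Prime] (i : Fin 3) : (ee q i) ≠ 0 := by
  intro h
  have := congrFun h i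
  rw [ee_apply] at this
  simp at this

/-- if `q > 2` is prime and `f : (ℤ/q)³ → ℤ/2` restricts to an abelian flag
function on every subgroup of rank at most 2, then `f` is an abelian flag function. -/
theorem stmt_5 (q : ℕ) (hq : q.Prime) (hq2 : 2 < q)
    (f : (Fin 3 → ZMod q) → ZMod 2)
    (hrk2 : ∀ C : AddSubgroup (Fin 3 → ZMod q),
      (∃ x y : Fin 3 → ZMod q, C = AddSubgroup.closure {x, y}) →
      IsAFCop q (fun c : C => f (c : Fin 3 → ZMod q))) :
    IsAFCop q f := by
  haveI hfact : Fact q.Prime := ⟨hq⟩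
  haveI : NeZero q := ⟨hq.pos.ne'⟩
  -- global invariance
  have hinv : InvariantCop q f := by
    intro n hn a
    have h := (hrk2 (AddSubgroup.closure {a, a}) ⟨a, a, rfl⟩).1 n hn
      ⟨a, AddSubgroup.subset_closure (Set.mem_insert _ _)⟩
    simpa using h
  -- scalar invariance
  have inv' : ∀ (c : ZMod q) (a : Fin 3 → ZMod q), c ≠ 0 → f (c • a) = f a := by
    intro c a hc
    have h1 : ((c.val : ℤ) : ZMod q) = c := by
      push_cast
      rw [ZMod.natCast_val, ZMod.cast_id]
    have hv0 : c.val ≠ 0 := fun h => hc (by rw [← h1, h]; simp)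
    have hvq : c.val < q := ZMod.val_lt c
    have hcop : IsCoprime ((c.val : ℤ)) (q : ℤ) := by
      rw [Int.isCoprime_iff_gcd_eq_one]
      have hnc : Nat.Coprime c.val q :=
        ((Nat.Prime.coprime_iff_not_dvd hq).mpr (Nat.not_dvd_of_pos_of_lt
          (Nat.pos_of_ne_zero hv0) hvq)).symm
      rw [Int.gcd_natCast_natCast]
      exact hnc
    have hzz := hinv (c.val : ℤ) hcop a
    rw [← hzz]
    congr 1
    conv_lhs => rw [← h1]
    rw [Int.cast_smul_eq_zsmul]
  -- the per-plane monochromaticity property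
  have plane : ∀ x y : Fin 3 → ZMod q, x ≠ 0 →
      ∃ L : Submodule (ZMod q) (Fin 3 → ZMod q), L < Submodule.span (ZMod q) {x, y} ∧
        ∀ u v : Fin 3 → ZMod q,
          u ∈ Submodule.span (ZMod q) ({x, y} : Set (Fin 3 → ZMod q)) → u ∉ L →
          v ∈ Submodule.span (ZMod q) ({x, y} : Set (Fin 3 → ZMod q)) → v ∉ L → f u = f v := by
    intro x y hx0
    set C := AddSubgroup.closure ({x, y} : Set (Fin 3 → ZMod q)) with hCdef
    have hxC : x ∈ C := AddSubgroup.subset_closure (Set.mem_insert _ _)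
    haveI : Nontrivial C := by
      refine ⟨⟨x, hxC⟩, 0, ?_⟩
      intro h
      exact hx0 (congrArg Subtype.val h)
    obtain ⟨H, hHne, hHconst⟩ := flag_top (hrk2 C ⟨x, y, rfl⟩).2
    have hsetC : (C : Set (Fin 3 → ZMod q)) =
        (Submodule.span (ZMod q) ({x, y} : Set (Fin 3 → ZMod q)) : Set (Fin 3 → ZMod q)) :=
      closure_eq_span _
    set L := toMod (H.map C.subtype) with hLdef
    have hmemL : ∀ u : Fin 3 → ZMod q, u ∈ L ↔ ∃ d : C, d ∈ H ∧ (d : Fin 3 → ZMod q) = u := by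
      intro u
      rw [hLdef, mem_toMod, AddSubgroup.mem_map]
      constructor
      · rintro ⟨d, hd, rfl⟩; exact ⟨d, hd, rfl⟩
      · rintro ⟨d, hd, rfl⟩; exact ⟨d, hd, rfl⟩
    refine ⟨L, lt_of_le_of_ne ?_ ?_, ?_⟩
    · intro u hu
      obtain ⟨d, _, rfl⟩ := (hmemL _).mp hu
      have hdC : (d : Fin 3 → ZMod q) ∈ (C : Set (Fin 3 → ZMod q)) := d.2
      rw [hsetC] at hdC
      exact hdC
    · intro hLeq
      apply hHne
      ext c
      simp only [AddSubgroup.mem_top, iff_true]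
      have hcL : (c : Fin 3 → ZMod q) ∈ L := by
        rw [hLeq]
        have := c.2
        rw [show (c : Fin 3 → ZMod q) ∈ C ↔ (c : Fin 3 → ZMod q) ∈ (C : Set (Fin 3 → ZMod q)) from Iff.rfl,
          hsetC] at this
        exact this
      obtain ⟨d, hd, hdc⟩ := (hmemL _).mp hcL
      have : d = c := Subtype.ext hdc
      rwa [← this]
    · intro u v hu hunL hv hvnL
      have huC : u ∈ C := by
        rw [show u ∈ C ↔ u ∈ (C : Set (Fin 3 → ZMod q)) from Iff.rfl, hsetC]; exact hu
      have hvC : v ∈ C := by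
        rw [show v ∈ C ↔ v ∈ (C : Set (Fin 3 → ZMod q)) from Iff.rfl, hsetC]; exact hv
      exact hHconst ⟨u, huC⟩ ⟨v, hvC⟩
        (fun h => hunL ((hmemL u).mpr ⟨⟨u, huC⟩, h, rfl⟩))
        (fun h => hvnL ((hmemL v).mpr ⟨⟨v, hvC⟩, h, rfl⟩))
  -- constancy on punctured rank-one pieces
  have lineMono : ∀ (x y : Fin 3 → ZMod q) (L : Submodule (ZMod q) (Fin 3 → ZMod q)),
      L < Submodule.span (ZMod q) {x, y} →
      ∀ u v, u ∈ L → v ∈ L → u ≠ 0 → v ≠ 0 → f u = f v := by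
    intro x y L hL u v hu hv hu0 hv0
    by_cases hvs : v ∈ Submodule.span (ZMod q) ({u} : Set (Fin 3 → ZMod q))
    · rw [Submodule.mem_span_singleton] at hvs
      obtain ⟨c, rfl⟩ := hvs
      have hc0 : c ≠ 0 := fun h => hv0 (by rw [h, zero_smul])
      exact (inv' c u hc0).symm
    · exact (pair_in hL hu hv hu0 hvs).elim
  refine ⟨hinv, ?_⟩
  by_cases hconf : ∃ (w : ZMod 2) (x y : Fin 3 → ZMod q),
      ∀ a, a ∉ Submodule.span (ZMod q) ({x, y} : Set (Fin 3 → ZMod q)) → f a = w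
  · -- confined case: build the flag filtration
    obtain ⟨w, x0, y0, hw0⟩ := hconf
    obtain ⟨x, y, hx0, hw⟩ : ∃ x y : Fin 3 → ZMod q, x ≠ 0 ∧
        ∀ a, a ∉ Submodule.span (ZMod q) ({x, y} : Set (Fin 3 → ZMod q)) → f a = w := by
      by_cases hx : x0 ≠ 0
      · exact ⟨x0, y0, hx, hw0⟩
      · by_cases hy : y0 ≠ 0
        · refine ⟨y0, x0, hy, ?_⟩
          intro a ha
          apply hw0
          rwa [Set.pair_comm]
        · push_neg at hx hy
          subst hx; subst hy
          refine ⟨ee q 1, ee q 2, ee_ne_zero 1, ?_⟩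
          intro a ha
          apply hw0
          intro hmem
          rw [Set.pair_eq_singleton, Submodule.span_zero_singleton, Submodule.mem_bot] at hmem
          exact ha (hmem ▸ Submodule.zero_mem _)
    set Vsp := Submodule.span (ZMod q) ({x, y} : Set (Fin 3 → ZMod q)) with hVsp
    obtain ⟨L, hL, hLconst⟩ := plane x y hx0
    have hVtop : Vsp.toAddSubgroup < ⊤ := by
      have := toAdd_lt (lt_top_iff_ne_top.mpr (span_pair_ne_top x y) : Vsp < ⊤)
      rwa [Submodule.top_toAddSubgroup] at this
    have hc0 : ∀ u v : Fin 3 → ZMod q, u ∉ Vsp.toAddSubgroup → v ∉ Vsp.toAddSubgroup →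
        f u = f v := by
      intro u v hu hv
      rw [hw u (fun h => hu h), hw v (fun h => hv h)]
    by_cases hLbot : L = ⊥
    · refine flag_chain3 f Vsp.toAddSubgroup ⊥ hVtop ?_ hc0 ?_ ?_
      · refine SetLike.lt_iff_le_and_exists.mpr ⟨bot_le, x, ?_, ?_⟩
        · exact Submodule.subset_span (Set.mem_insert _ _)
        · rw [AddSubgroup.mem_bot]; exact hx0
      · intro u v hu hu0 hv hv0
        refine hLconst u v hu ?_ hv ?_ <;> rw [hLbot, Submodule.mem_bot]
        · intro h; exact hu0 (by rw [h]; exact AddSubgroup.zero_mem _)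
        · intro h; exact hv0 (by rw [h]; exact AddSubgroup.zero_mem _)
      · intro u v hu hv
        rw [AddSubgroup.mem_bot] at hu hv
        rw [hu, hv]
    · obtain ⟨u0, hu0L, hu00⟩ := (Submodule.ne_bot_iff L).mp hLbot
      refine flag_chain4 f Vsp.toAddSubgroup L.toAddSubgroup ⊥ hVtop (toAdd_lt hL) ?_ hc0
        ?_ ?_ ?_
      · refine SetLike.lt_iff_le_and_exists.mpr ⟨bot_le, u0, hu0L, ?_⟩
        rw [AddSubgroup.mem_bot]; exact hu00
      · intro u v hu hunL hv hvnL
        exact hLconst u v hu hunL hv hvnL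
      · intro u v hu hunB hv hvnB
        refine lineMono x y L hL u v hu hv ?_ ?_
        · intro h; exact hunB (by rw [h]; exact AddSubgroup.zero_mem _)
        · intro h; exact hvnB (by rw [h]; exact AddSubgroup.zero_mem _)
      · intro u v hu hv
        rw [AddSubgroup.mem_bot] at hu hv
        rw [hu, hv]
  · exfalso
    push_neg at hconf
    have zkey : ∀ u v : ZMod 2, u ≠ v + 1 → u = v := by decide
    have config : ∀ w : ZMod 2,
        (Finset.univ.filter (fun a : Fin 3 → ZMod q => a ≠ 0 ∧ f a ≠ w)).card ≤
          2 * (q * (q - 1)) := by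
      intro w
      obtain ⟨p2, hp2span, hp2v⟩ := hconf (w + 1) 0 0
      obtain ⟨p1, hp1span, hp1v⟩ := hconf (w + 1) p2 p2
      obtain ⟨z, hzspan, hzv⟩ := hconf (w + 1) p1 p2
      have hp2v' := zkey _ _ hp2v
      have hp1v' := zkey _ _ hp1v
      have hzv' := zkey _ _ hzv
      have hp20 : p2 ≠ 0 := by
        intro h
        rw [h] at hp2span
        exact hp2span (Submodule.zero_mem _)
      rw [Set.pair_eq_singleton] at hp1span
      have hp10 : p1 ≠ 0 := by
        intro h
        rw [h] at hp1span
        exact hp1span (Submodule.zero_mem _)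
      obtain ⟨LC, hLC, hLCconst⟩ := plane p1 p2 hp10
      have hwit : ∃ pw, pw ∈ Submodule.span (ZMod q) ({p1, p2} : Set (Fin 3 → ZMod q)) ∧
          pw ∉ LC ∧ f pw = w := by
        by_cases h1 : p1 ∈ LC
        · by_cases h2 : p2 ∈ LC
          · exfalso
            have hle : Submodule.span (ZMod q) ({p1, p2} : Set (Fin 3 → ZMod q)) ≤ LC := by
              rw [Submodule.span_le]
              rintro u (rfl | rfl)
              · exact h1
              · exact h2
            exact hLC.ne (le_antisymm hLC.le hle)
          · exact ⟨p2, Submodule.subset_span (Set.mem_insert_of_mem _ rfl), h2, hp2v'⟩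
        · exact ⟨p1, Submodule.subset_span (Set.mem_insert _ _), h1, hp1v'⟩
      obtain ⟨pw, hpwC, hpwL, hpwv⟩ := hwit
      have hS : ∀ u ∈ Submodule.span (ZMod q) ({p1, p2} : Set (Fin 3 → ZMod q)),
          u ∉ LC → f u = w := by
        intro u hu hunL
        exact (hLCconst u pw hu hunL hpwC hpwL).trans hpwv
      exact core hq2 f w inv' plane p1 p2 z hp20 hp1span hzspan LC hLC hS hzv'
    have b1 := config 1
    have b0 := config 0
    have hdisj : Disjoint
        (Finset.univ.filter (fun a : Fin 3 → ZMod q => a ≠ 0 ∧ f a ≠ 1))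
        (Finset.univ.filter (fun a : Fin 3 → ZMod q => a ≠ 0 ∧ f a ≠ 0)) := by
      rw [Finset.disjoint_left]
      intro a h1 h2
      rw [Finset.mem_filter] at h1 h2
      rcases (show ∀ u : ZMod 2, u = 0 ∨ u = 1 by decide) (f a) with h | h
      · exact h2.2.2 h
      · exact h1.2.2 h
    have hunion : Finset.univ.filter (fun a : Fin 3 → ZMod q => a ≠ 0) =
        (Finset.univ.filter (fun a : Fin 3 → ZMod q => a ≠ 0 ∧ f a ≠ 1)) ∪
        (Finset.univ.filter (fun a : Fin 3 → ZMod q => a ≠ 0 ∧ f a ≠ 0)) := by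
      ext a
      simp only [Finset.mem_union, Finset.mem_filter, Finset.mem_univ, true_and]
      constructor
      · intro h
        rcases (show ∀ u : ZMod 2, u ≠ 1 ∨ u ≠ 0 by decide) (f a) with h' | h'
        · exact Or.inl ⟨h, h'⟩
        · exact Or.inr ⟨h, h'⟩
      · rintro (⟨h, _⟩ | ⟨h, _⟩) <;> exact h
    have hcardV : Fintype.card (Fin 3 → ZMod q) = q ^ 3 := by
      rw [Fintype.card_fun, ZMod.card, Fintype.card_fin]
    have hcard0 : (Finset.univ.filter (fun a : Fin 3 → ZMod q => a ≠ 0)).card = q ^ 3 - 1 := by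
      rw [Finset.filter_ne', Finset.card_erase_of_mem (Finset.mem_univ _), Finset.card_univ,
        hcardV]
    have hmain : q ^ 3 - 1 ≤ 2 * (q * (q - 1)) + 2 * (q * (q - 1)) := by
      rw [← hcard0, hunion, Finset.card_union_of_disjoint hdisj]
      exact add_le_add b1 b0
    obtain ⟨k, rfl⟩ : ∃ k, q = k + 3 := ⟨q - 3, by omega⟩
    have h3 : k + 3 - 1 = k + 2 := by omega
    rw [h3] at hmain
    have hpow : 1 ≤ (k + 3) ^ 3 := Nat.one_le_pow _ _ (by omega)
    have hmain2 : (k + 3) ^ 3 ≤ 2 * ((k + 3) * (k + 2)) + 2 * ((k + 3) * (k + 2)) + 1 := by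
      omega
    nlinarith [hmain2]
end

section
/- Let q > 2 be a prime and f a Z/2-valued function on the projective plane P²(F_q) such that the restriction of f to every projective line ℓ ⊂ P²(F_q) is constant on the complement of at most one point of ℓ. Then f is constant on the complement of at most one projective line in P²(F_q). -/
set_option maxHeartbeats 1000000

namespace Stmt6Aux

open Submodule Module

variable {q : ℕ} [Fact (Nat.Prime q)]

abbrev V (q : ℕ) := Fin 3 → ZMod q

abbrev near (x y : V q) : Prop := ∃ c : ZMod q, y = c • x

lemma near_symm {x y : V q} (hy : y ≠ 0) (h : near x y) : near y x := by
  obtain ⟨c, rfl⟩ := h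
  have hc : c ≠ 0 := by rintro rfl; simp at hy
  exact ⟨c⁻¹, by rw [smul_smul, inv_mul_cancel₀ hc, one_smul]⟩

lemma near_trans {z y₁ y₂ : V q} (h1 : near z y₁) (h2 : near z y₂) (hy : y₁ ≠ 0) :
    near y₁ y₂ := by
  obtain ⟨c, rfl⟩ := h1
  obtain ⟨d, rfl⟩ := h2
  have hc : c ≠ 0 := by rintro rfl; simp at hy
  exact ⟨d * c⁻¹, by rw [smul_smul, mul_assoc, inv_mul_cancel₀ hc, mul_one]⟩

lemma near_mem {W : Submodule (ZMod q) (V q)} {y z : V q} (h : near y z) (hy : y ∈ W) :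
    z ∈ W := by
  obtain ⟨c, rfl⟩ := h; exact W.smul_mem c hy

lemma near_mem_rev {W : Submodule (ZMod q) (V q)} {p z : V q} (h : near p z) (hz : z ≠ 0)
    (hzW : z ∈ W) : p ∈ W := near_mem (near_symm hz h) hzW

lemma indep_of_not_near {x y : V q} (hx : x ≠ 0) (h : ¬ near x y) :
    LinearIndependent (ZMod q) ![x, y] := by
  rw [LinearIndependent.pair_iff' hx]
  intro a ha
  exact h ⟨a, ha.symm⟩

lemma pair_fst_ne_zero {u v : V q} (h : LinearIndependent (ZMod q) ![u, v]) : u ≠ 0 := by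
  intro hu
  obtain ⟨h1, -⟩ := LinearIndependent.pair_iff.mp h 1 0 (by simp [hu])
  exact one_ne_zero h1

lemma pair_snd_ne_zero {u v : V q} (h : LinearIndependent (ZMod q) ![u, v]) : v ≠ 0 := by
  intro hv
  obtain ⟨-, h2⟩ := LinearIndependent.pair_iff.mp h 0 1 (by simp [hv])
  exact one_ne_zero h2

lemma not_near_of_indep {u v : V q} (h : LinearIndependent (ZMod q) ![u, v]) : ¬ near u v :=
  fun ⟨d, hd⟩ => ((LinearIndependent.pair_iff' (pair_fst_ne_zero h)).mp h) d hd.symm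

lemma mem_left {u v : V q} : u ∈ span (ZMod q) {u, v} := subset_span (Set.mem_insert _ _)

lemma mem_right {u v : V q} : v ∈ span (ZMod q) {u, v} :=
  subset_span (Set.mem_insert_of_mem _ rfl)

lemma finrank_line {u v : V q} (h : LinearIndependent (ZMod q) ![u, v]) :
    finrank (ZMod q) (span (ZMod q) {u, v}) = 2 := by
  have h2 := finrank_span_eq_card (R := ZMod q) h
  rwa [Matrix.range_cons_cons_empty, Fintype.card_fin] at h2

lemma inter_line {W₁ W₂ : Submodule (ZMod q) (V q)} (h1 : finrank (ZMod q) W₁ = 2)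
    (h2 : finrank (ZMod q) W₂ = 2) (hne : W₁ ≠ W₂) :
    ∃ z : V q, z ≠ 0 ∧ z ∈ W₁ ∧ z ∈ W₂ ∧ ∀ y, y ∈ W₁ → y ∈ W₂ → near z y := by
  have htop : finrank (ZMod q) (V q) = 3 := by
    rw [Module.finrank_pi]; simp
  have hlt : W₁ < W₁ ⊔ W₂ := by
    rcases lt_or_eq_of_le (le_sup_left : W₁ ≤ W₁ ⊔ W₂) with h | h
    · exact h
    · exfalso
      have hle : W₂ ≤ W₁ := le_sup_right.trans h.ge
      exact hne (Submodule.eq_of_le_of_finrank_le hle (by rw [h1, h2])).symm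
  have hsup3 : finrank (ZMod q) (W₁ ⊔ W₂ : Submodule (ZMod q) (V q)) = 3 := by
    have hlt2 := Submodule.finrank_lt_finrank_of_lt hlt
    have hle3 := (Submodule.finrank_le (W₁ ⊔ W₂)).trans htop.le
    omega
  have hinf1 : finrank (ZMod q) (W₁ ⊓ W₂ : Submodule (ZMod q) (V q)) = 1 := by
    have hh := Submodule.finrank_sup_add_finrank_inf_eq W₁ W₂
    rw [h1, h2, hsup3] at hh; omega
  have hbot : W₁ ⊓ W₂ ≠ ⊥ := by
    intro h; rw [h] at hinf1; simp at hinf1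
  obtain ⟨z, hz, hz0⟩ := Submodule.exists_mem_ne_zero_of_ne_bot hbot
  have hzmem := Submodule.mem_inf.mp hz
  refine ⟨z, hz0, hzmem.1, hzmem.2, ?_⟩
  have hspan : span (ZMod q) {z} = W₁ ⊓ W₂ := by
    apply Submodule.eq_of_le_of_finrank_le
    · rw [span_singleton_le_iff_mem]; exact hz
    · rw [hinf1, finrank_span_singleton hz0]
  intro y hy1 hy2
  have hy : y ∈ span (ZMod q) {z} := hspan ▸ (Submodule.mem_inf.mpr ⟨hy1, hy2⟩)
  obtain ⟨a, ha⟩ := Submodule.mem_span_singleton.mp hy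
  exact ⟨a, ha.symm⟩

lemma inter_near {W₁ W₂ : Submodule (ZMod q) (V q)} (h1 : finrank (ZMod q) W₁ = 2)
    (h2 : finrank (ZMod q) W₂ = 2) {w : V q} (hw1 : w ∈ W₁) (hw2 : w ∉ W₂)
    {p : V q} (hp1 : p ∈ W₁) (hp2 : p ∈ W₂) (hp0 : p ≠ 0) :
    ∀ y, y ∈ W₁ → y ∈ W₂ → near p y := by
  have hne : W₁ ≠ W₂ := fun h => hw2 (h ▸ hw1)
  obtain ⟨z, hz0, hz1, hz2, hzall⟩ := inter_line h1 h2 hne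
  intro y hy1 hy2
  exact near_trans (hzall p hp1 hp2) (hzall y hy1 hy2) hp0

lemma pick (hq2 : q ≠ 2) {u w : V q} (h : LinearIndependent (ZMod q) ![u, w])
    (z₁ z₂ z₃ : V q) :
    ∃ y : V q, y ∈ span (ZMod q) {u, w} ∧ y ≠ 0 ∧ ¬ near z₁ y ∧ ¬ near z₂ y ∧ ¬ near z₃ y := by
  have hq : Nat.Prime q := Fact.out
  have h2 : (2 : ZMod q) ≠ 0 := by
    have h2' : ((2 : ℕ) : ZMod q) ≠ 0 := by
      rw [Ne, ZMod.natCast_eq_zero_iff]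
      intro hdvd
      exact hq2 ((Nat.prime_dvd_prime_iff_eq hq Nat.prime_two).mp hdvd)
    simpa using h2'
  have h21 : (2 : ZMod q) ≠ 1 := by
    intro hh
    have : (1 : ZMod q) = 0 := by
      have := sub_eq_zero.mpr hh
      calc (1 : ZMod q) = 2 - 1 := by ring
      _ = 0 := by rw [hh]; ring
    exact one_ne_zero this
  have hp := LinearIndependent.pair_iff.mp h
  have key : ∀ s1 t1 s2 t2 : ZMod q, near (s1 • u + t1 • w) (s2 • u + t2 • w) →
      ∃ c : ZMod q, s2 = c * s1 ∧ t2 = c * t1 := by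
    rintro s1 t1 s2 t2 ⟨c, hc⟩
    have h0 : (s2 - c * s1) • u + (t2 - c * t1) • w =
        (s2 • u + t2 • w) - c • (s1 • u + t1 • w) := by module
    rw [hc, sub_self] at h0
    obtain ⟨e1, e2⟩ := hp _ _ h0
    exact ⟨c, sub_eq_zero.mp e1, sub_eq_zero.mp e2⟩
  -- injectivity of the three parameters
  have hts : Function.Injective (![0, 1, 2] : Fin 3 → ZMod q) := by
    intro i j hij
    fin_cases i <;> fin_cases j <;> first
      | rfl
      | (exfalso; revert hij; simp only [Matrix.cons_val_zero, Matrix.cons_val_one,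
          Matrix.head_cons, Matrix.cons_val_two, Matrix.tail_cons]
         intro hij
         first
           | exact one_ne_zero hij
           | exact one_ne_zero hij.symm
           | exact h2 hij
           | exact h2 hij.symm
           | exact h21 hij
           | exact h21 hij.symm)
  -- candidates
  set c1 : Option (Fin 3) → ZMod q := fun o => o.elim 0 (fun _ => 1) with hc1
  set c2 : Option (Fin 3) → ZMod q := fun o => o.elim 1 (fun i => ![0, 1, 2] i) with hc2
  set C : Option (Fin 3) → V q := fun o => (c1 o) • u + (c2 o) • w with hCdef
  have hmem : ∀ o, C o ∈ span (ZMod q) {u, w} := fun o =>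
    add_mem (smul_mem _ _ mem_left) (smul_mem _ _ mem_right)
  have hzero : ∀ o, C o ≠ 0 := by
    intro o h0
    obtain ⟨e1, e2⟩ := hp _ _ h0
    cases o with
    | none => exact one_ne_zero e2
    | some i => exact one_ne_zero e1
  have hpair : ∀ o o', o ≠ o' → ¬ near (C o) (C o') := by
    intro o o' hne hnear
    obtain ⟨c, e1, e2⟩ := key _ _ _ _ hnear
    cases o with
    | none =>
      cases o' with
      | none => exact hne rfl
      | some j =>
        -- e1 : 1 = c * 0
        simp only [hc1, hc2, Option.elim] at e1 e2
        rw [mul_zero] at e1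
        exact one_ne_zero e1
    | some i =>
      cases o' with
      | none =>
        -- e1 : 0 = c * 1, e2 : 1 = c * ts i
        simp only [hc1, hc2, Option.elim] at e1 e2
        rw [mul_one] at e1
        rw [← e1, zero_mul] at e2
        exact one_ne_zero e2
      | some j =>
        simp only [hc1, hc2, Option.elim] at e1 e2
        rw [mul_one] at e1
        rw [← e1, one_mul] at e2
        exact hne (congrArg some (hts e2.symm))
  by_contra hcon
  push_neg at hcon
  have hbad : ∀ o, ∃ k : Fin 3, near (![z₁, z₂, z₃] k) (C o) := by
    intro o
    by_cases k1 : near z₁ (C o)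
    · exact ⟨0, k1⟩
    by_cases k2 : near z₂ (C o)
    · exact ⟨1, k2⟩
    exact ⟨2, hcon (C o) (hmem o) (hzero o) (fun c hc => k1 ⟨c, hc⟩) (fun c hc => k2 ⟨c, hc⟩)⟩
  choose g hg using hbad
  obtain ⟨o, o', hne, heq⟩ := Fintype.exists_ne_map_eq_of_card_lt g (by simp)
  exact hpair o o' hne (near_trans (hg o) (heq ▸ hg o') (hzero o))
lemma exc_move {f : V q → ZMod 2} {W : Submodule (ZMod q) (V q)} {e : V q} {s : ZMod 2}
    (hW : ∀ y ∈ W, y ≠ 0 → ¬ near e y → f y = s)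
    {p : V q} (hpW : p ∈ W) (hp0 : p ≠ 0) (hfp : f p ≠ s) :
    ∀ y ∈ W, y ≠ 0 → ¬ near p y → f y = s := by
  have hep : near e p := by
    by_contra hn; exact hfp (hW p hpW hp0 hn)
  intro y hy hy0 hnp
  exact hW y hy hy0 (fun hey => hnp (near_trans hep hey hp0))

lemma line_exc {f : V q → ZMod 2}
    (hlines : ∀ W : Submodule (ZMod q) (V q), finrank (ZMod q) W = 2 →
      ∃ x₀ s, ∀ x ∈ W, x ≠ 0 → (¬∃ c : ZMod q, x = c • x₀) → f x = s)
    {u v : V q} (h : LinearIndependent (ZMod q) ![u, v]) {t : ZMod 2}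
    (hfu : f u = t) (hfv : f v = t) :
    ∃ e, ∀ y ∈ span (ZMod q) {u, v}, y ≠ 0 → ¬ near e y → f y = t := by
  obtain ⟨e, s, hs⟩ := hlines _ (finrank_line h)
  have hs' : ∀ y ∈ span (ZMod q) {u, v}, y ≠ 0 → ¬ near e y → f y = s := hs
  have hst : s = t := by
    by_cases hu : near e u
    · by_cases hv : near e v
      · exact absurd (near_trans hu hv (pair_fst_ne_zero h)) (not_near_of_indep h)
      · rw [← hfv]; exact (hs' v mem_right (pair_snd_ne_zero h) hv).symm
    · rw [← hfu]; exact (hs' u mem_left (pair_fst_ne_zero h) hu).symm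
  exact ⟨e, hst ▸ hs'⟩
lemma aux (hq2 : q ≠ 2) {f : V q → ZMod 2}
    (hlines : ∀ W : Submodule (ZMod q) (V q), finrank (ZMod q) W = 2 →
      ∃ x₀ s, ∀ x ∈ W, x ≠ 0 → (¬∃ c : ZMod q, x = c • x₀) → f x = s)
    (hcon : ∀ W : Submodule (ZMod q) (V q), finrank (ZMod q) W = 2 →
      ∀ s : ZMod 2, ∃ x, x ≠ 0 ∧ x ∉ W ∧ f x ≠ s)
    (c : ZMod 2) {p₁ p₂ r₁ r₂ x : V q}
    (hfp₁ : f p₁ = c) (hfp₂ : f p₂ = c) (hfr₁ : f r₁ = c + 1) (hfr₂ : f r₂ = c + 1)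
    (hip : LinearIndependent (ZMod q) ![p₁, p₂]) (hir : LinearIndependent (ZMod q) ![r₁, r₂])
    (hx0 : x ≠ 0) (hxα : x ∈ span (ZMod q) {p₁, p₂}) (hxβ : x ∈ span (ZMod q) {r₁, r₂})
    (hfx : f x = c) : False := by
  have hcc : c ≠ c + 1 := (by decide : ∀ c : ZMod 2, c ≠ c + 1) c
  have hrα : finrank (ZMod q) (span (ZMod q) {p₁, p₂}) = 2 := finrank_line hip
  have hrβ : finrank (ZMod q) (span (ZMod q) {r₁, r₂}) = 2 := finrank_line hir
  -- the two lines are distinct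
  have hne : span (ZMod q) {p₁, p₂} ≠ span (ZMod q) {r₁, r₂} := by
    intro hEq
    obtain ⟨e, he⟩ := line_exc hlines hip hfp₁ hfp₂
    by_cases h1 : near e r₁
    · by_cases h2 : near e r₂
      · exact absurd (near_trans h1 h2 (pair_fst_ne_zero hir)) (not_near_of_indep hir)
      · exact hcc ((he r₂ (hEq.symm ▸ (mem_right : r₂ ∈ span (ZMod q) {r₁, r₂}))
          (pair_snd_ne_zero hir) h2).symm.trans hfr₂)
    · exact hcc ((he r₁ (hEq.symm ▸ (mem_left : r₁ ∈ span (ZMod q) {r₁, r₂}))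
        (pair_fst_ne_zero hir) h1).symm.trans hfr₁)
  -- common point is (projectively) x
  obtain ⟨z₀, hz₀0, hz₀α, hz₀β, hz₀all⟩ := inter_line hrα hrβ hne
  have hxall : ∀ y, y ∈ span (ZMod q) {p₁, p₂} → y ∈ span (ZMod q) {r₁, r₂} → near x y :=
    fun y h1 h2 => near_trans (hz₀all x hxα hxβ) (hz₀all y h1 h2) hx0
  -- the exceptional point of β is x
  obtain ⟨eβ, heβ⟩ := line_exc hlines hir hfr₁ hfr₂
  have hβx : ∀ y ∈ span (ZMod q) {r₁, r₂}, y ≠ 0 → ¬ near x y → f y = c + 1 :=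
    exc_move heβ hxβ hx0 (by rw [hfx]; exact hcc)
  obtain ⟨eα, heα⟩ := line_exc hlines hip hfp₁ hfp₂
  -- pick points
  obtain ⟨b₁, hb₁β, hb₁0, hb₁x, -, -⟩ := pick hq2 hir x x x
  obtain ⟨b₂, hb₂β, hb₂0, hb₂x, hb₁b₂, -⟩ := pick hq2 hir x b₁ b₁
  obtain ⟨b₃, hb₃β, hb₃0, hb₃x, hb₁b₃, hb₂b₃⟩ := pick hq2 hir x b₁ b₂
  obtain ⟨a₁, ha₁α, ha₁0, ha₁x, ha₁e, -⟩ := pick hq2 hip x eα eα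
  obtain ⟨a₂, ha₂α, ha₂0, ha₂x, ha₂e, ha₁a₂⟩ := pick hq2 hip x eα a₁
  have hfb₁ : f b₁ = c + 1 := hβx b₁ hb₁β hb₁0 hb₁x
  have hfb₂ : f b₂ = c + 1 := hβx b₂ hb₂β hb₂0 hb₂x
  have hfb₃ : f b₃ = c + 1 := hβx b₃ hb₃β hb₃0 hb₃x
  have hfa₁ : f a₁ = c := heα a₁ ha₁α ha₁0 ha₁e
  have hfa₂ : f a₂ = c := heα a₂ ha₂α ha₂0 ha₂e
  -- membership exclusions
  have hb₁α : b₁ ∉ span (ZMod q) {p₁, p₂} := fun h => hb₁x (hxall b₁ h hb₁β)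
  have hb₂α : b₂ ∉ span (ZMod q) {p₁, p₂} := fun h => hb₂x (hxall b₂ h hb₂β)
  have hb₃α : b₃ ∉ span (ZMod q) {p₁, p₂} := fun h => hb₃x (hxall b₃ h hb₃β)
  have ha₁β : a₁ ∉ span (ZMod q) {r₁, r₂} := fun h => ha₁x (hxall a₁ ha₁α h)
  have ha₂β : a₂ ∉ span (ZMod q) {r₁, r₂} := fun h => ha₂x (hxall a₂ ha₂α h)
  have hnab : ∀ a' ∈ span (ZMod q) {p₁, p₂}, ∀ b', b' ∉ span (ZMod q) {p₁, p₂} →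
      ¬ near a' b' := fun a' ha' b' hb' ⟨d, hd⟩ => hb' (hd ▸ Submodule.smul_mem _ d ha')
  -- symmetric non-nearness
  have ha₂a₁ : ¬ near a₂ a₁ := fun h => ha₁a₂ (near_symm ha₁0 h)
  have hb₃b₁ : ¬ near b₃ b₁ := fun h => hb₁b₃ (near_symm hb₁0 h)
  -- type dichotomy for connecting lines
  have htype : ∀ a b : V q, a ∈ span (ZMod q) {p₁, p₂} → b ∈ span (ZMod q) {r₁, r₂} →
      a ≠ 0 → b ≠ 0 → f a = c → f b = c + 1 → ¬ near a b →
      (∀ y ∈ span (ZMod q) {a, b}, y ≠ 0 → ¬ near a y → f y = c + 1) ∨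
      (∀ y ∈ span (ZMod q) {a, b}, y ≠ 0 → ¬ near b y → f y = c) := by
    intro a b haα hbβ ha0 hb0 hfa hfb hnab'
    obtain ⟨e, s, hs⟩ := hlines _ (finrank_line (indep_of_not_near ha0 hnab'))
    have hs' : ∀ y ∈ span (ZMod q) {a, b}, y ≠ 0 → ¬ near e y → f y = s := hs
    rcases (by decide : ∀ s c : ZMod 2, s = c ∨ s = c + 1) s c with rfl | rfl
    · right
      exact exc_move hs' mem_right hb0 (by rw [hfb]; exact fun hh => hcc hh.symm)
    · left
      exact exc_move hs' mem_left ha0 (by rw [hfa]; exact hcc)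
  -- types of "disjoint" connecting lines agree
  have hcross : ∀ a b a' b' : V q,
      a ∈ span (ZMod q) {p₁, p₂} → a' ∈ span (ZMod q) {p₁, p₂} →
      b ∈ span (ZMod q) {r₁, r₂} → b' ∈ span (ZMod q) {r₁, r₂} →
      a ≠ 0 → a' ≠ 0 → b ≠ 0 → b' ≠ 0 →
      b ∉ span (ZMod q) {p₁, p₂} → b' ∉ span (ZMod q) {p₁, p₂} →
      a ∉ span (ZMod q) {r₁, r₂} → a' ∉ span (ZMod q) {r₁, r₂} →
      ¬ near a a' → ¬ near b b' →
      (∀ y ∈ span (ZMod q) {a, b}, y ≠ 0 → ¬ near a y → f y = c + 1) →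
      (∀ y ∈ span (ZMod q) {a', b'}, y ≠ 0 → ¬ near b' y → f y = c) → False := by
    intro a b a' b' haα ha'α hbβ hb'β ha0 ha'0 hb0 hb'0 hbα hb'α haβ ha'β hnaa hnbb hL hR
    have hiℓ : finrank (ZMod q) (span (ZMod q) {a, b}) = 2 :=
      finrank_line (indep_of_not_near ha0 (hnab a haα b hbα))
    have hiℓ' : finrank (ZMod q) (span (ZMod q) {a', b'}) = 2 :=
      finrank_line (indep_of_not_near ha'0 (hnab a' ha'α b' hb'α))
    have haℓ' : a ∉ span (ZMod q) {a', b'} := by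
      intro hmem
      exact hnaa (near_symm ha0
        (inter_near hiℓ' hrα mem_right hb'α mem_left ha'α ha'0 a hmem haα))
    have hb'ℓ : b' ∉ span (ZMod q) {a, b} := by
      intro hmem
      exact hnbb (inter_near hiℓ hrβ mem_left haβ mem_right hbβ hb0 b' hmem hb'β)
    have hneℓ : span (ZMod q) {a, b} ≠ span (ZMod q) {a', b'} :=
      fun h => haℓ' (h ▸ (mem_left : a ∈ span (ZMod q) {a, b}))
    obtain ⟨z, hz0, hzℓ, hzℓ', -⟩ := inter_line hiℓ hiℓ' hneℓ
    have h1 : f z = c + 1 := hL z hzℓ hz0 (fun h => haℓ' (near_mem_rev h hz0 hzℓ'))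
    have h2 : f z = c := hR z hzℓ' hz0 (fun h => hb'ℓ (near_mem_rev h hz0 hzℓ))
    exact hcc (h2.symm.trans h1)
  -- main case split
  rcases htype a₂ b₂ ha₂α hb₂β ha₂0 hb₂0 hfa₂ hfb₂ (hnab a₂ ha₂α b₂ hb₂α) with hL22 | hR22
  · -- all connecting lines have value c+1 off the a-point
    have hL13 : ∀ y ∈ span (ZMod q) {a₁, b₃}, y ≠ 0 → ¬ near a₁ y → f y = c + 1 := by
      rcases htype a₁ b₃ ha₁α hb₃β ha₁0 hb₃0 hfa₁ hfb₃ (hnab a₁ ha₁α b₃ hb₃α) with hL | hR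
      · exact hL
      · exact (hcross a₂ b₂ a₁ b₃ ha₂α ha₁α hb₂β hb₃β ha₂0 ha₁0 hb₂0 hb₃0 hb₂α hb₃α
          ha₂β ha₁β ha₂a₁ hb₂b₃ hL22 hR).elim
    have hL21 : ∀ y ∈ span (ZMod q) {a₂, b₁}, y ≠ 0 → ¬ near a₂ y → f y = c + 1 := by
      rcases htype a₂ b₁ ha₂α hb₁β ha₂0 hb₁0 hfa₂ hfb₁ (hnab a₂ ha₂α b₁ hb₁α) with hL | hR
      · exact hL
      · exact (hcross a₁ b₃ a₂ b₁ ha₁α ha₂α hb₃β hb₁β ha₁0 ha₂0 hb₃0 hb₁0 hb₃α hb₁α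
          ha₁β ha₂β ha₁a₂ hb₃b₁ hL13 hR).elim
    -- a point of value c off the line α
    obtain ⟨as, has0, hasα, hfas'⟩ := hcon _ hrα (c + 1)
    have hfas : f as = c := by
      revert hfas'
      rcases (by decide : ∀ u c : ZMod 2, u = c ∨ u = c + 1) (f as) c with h | h
      · intro _; exact h
      · intro hh; exact absurd h hh
    have hnas : ¬ near a₁ as := fun h => hasα (near_mem h ha₁α)
    have hiμ : finrank (ZMod q) (span (ZMod q) {a₁, as}) = 2 :=
      finrank_line (indep_of_not_near ha₁0 hnas)
    obtain ⟨eμ, heμ⟩ := line_exc hlines (indep_of_not_near ha₁0 hnas) hfa₁ hfas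
    have ha₂μ : a₂ ∉ span (ZMod q) {a₁, as} := fun h =>
      ha₁a₂ (inter_near hiμ hrα mem_right hasα mem_left ha₁α ha₁0 a₂ h ha₂α)
    have hi21 : finrank (ZMod q) (span (ZMod q) {a₂, b₁}) = 2 :=
      finrank_line (indep_of_not_near ha₂0 (hnab a₂ ha₂α b₁ hb₁α))
    have hi22 : finrank (ZMod q) (span (ZMod q) {a₂, b₂}) = 2 :=
      finrank_line (indep_of_not_near ha₂0 (hnab a₂ ha₂α b₂ hb₂α))
    have hne1 : span (ZMod q) {a₂, b₁} ≠ span (ZMod q) {a₁, as} :=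
      fun h => ha₂μ (h ▸ (mem_left : a₂ ∈ span (ZMod q) {a₂, b₁}))
    obtain ⟨z₁, hz₁0, hz₁ℓ, hz₁μ, -⟩ := inter_line hi21 hiμ hne1
    have hfz₁ : f z₁ = c + 1 := hL21 z₁ hz₁ℓ hz₁0 (fun h => ha₂μ (near_mem_rev h hz₁0 hz₁μ))
    have hz₁e : near eμ z₁ := by
      by_contra hn
      exact hcc ((heμ z₁ hz₁μ hz₁0 hn).symm.trans hfz₁)
    have hne2 : span (ZMod q) {a₂, b₂} ≠ span (ZMod q) {a₁, as} :=
      fun h => ha₂μ (h ▸ (mem_left : a₂ ∈ span (ZMod q) {a₂, b₂}))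
    obtain ⟨z₂, hz₂0, hz₂ℓ, hz₂μ, -⟩ := inter_line hi22 hiμ hne2
    have hfz₂ : f z₂ = c + 1 := hL22 z₂ hz₂ℓ hz₂0 (fun h => ha₂μ (near_mem_rev h hz₂0 hz₂μ))
    have hz₂e : near eμ z₂ := by
      by_contra hn
      exact hcc ((heμ z₂ hz₂μ hz₂0 hn).symm.trans hfz₂)
    have hz₂ℓ21 : z₂ ∈ span (ZMod q) {a₂, b₁} := near_mem (near_trans hz₁e hz₂e hz₁0) hz₁ℓ
    have hb₁ℓ22 : b₁ ∉ span (ZMod q) {a₂, b₂} := by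
      intro h
      exact hb₁b₂ (near_symm hb₁0
        (inter_near hi22 hrβ mem_left ha₂β mem_right hb₂β hb₂0 b₁ h hb₁β))
    have hza₂ : near a₂ z₂ :=
      inter_near hi21 hi22 mem_right hb₁ℓ22 mem_left mem_left ha₂0 z₂ hz₂ℓ21 hz₂ℓ
    exact ha₂μ (near_mem_rev hza₂ hz₂0 hz₂μ)
  · -- all connecting lines have value c off the b-point
    have hR11 : ∀ y ∈ span (ZMod q) {a₁, b₁}, y ≠ 0 → ¬ near b₁ y → f y = c := by
      rcases htype a₁ b₁ ha₁α hb₁β ha₁0 hb₁0 hfa₁ hfb₁ (hnab a₁ ha₁α b₁ hb₁α) with hL | hR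
      · exact (hcross a₁ b₁ a₂ b₂ ha₁α ha₂α hb₁β hb₂β ha₁0 ha₂0 hb₁0 hb₂0 hb₁α hb₂α
          ha₁β ha₂β ha₁a₂ hb₁b₂ hL hR22).elim
      · exact hR
    have hR23 : ∀ y ∈ span (ZMod q) {a₂, b₃}, y ≠ 0 → ¬ near b₃ y → f y = c := by
      rcases htype a₂ b₃ ha₂α hb₃β ha₂0 hb₃0 hfa₂ hfb₃ (hnab a₂ ha₂α b₃ hb₃α) with hL | hR
      · exact (hcross a₂ b₃ a₁ b₁ ha₂α ha₁α hb₃β hb₁β ha₂0 ha₁0 hb₃0 hb₁0 hb₃α hb₁α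
          ha₂β ha₁β ha₂a₁ hb₃b₁ hL hR11).elim
      · exact hR
    have hR12 : ∀ y ∈ span (ZMod q) {a₁, b₂}, y ≠ 0 → ¬ near b₂ y → f y = c := by
      rcases htype a₁ b₂ ha₁α hb₂β ha₁0 hb₂0 hfa₁ hfb₂ (hnab a₁ ha₁α b₂ hb₂α) with hL | hR
      · exact (hcross a₁ b₂ a₂ b₃ ha₁α ha₂α hb₂β hb₃β ha₁0 ha₂0 hb₂0 hb₃0 hb₂α hb₃α
          ha₁β ha₂β ha₁a₂ hb₂b₃ hL hR23).elim
      · exact hR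
    -- a point of value c+1 off the line β
    obtain ⟨bs, hbs0, hbsβ, hfbs'⟩ := hcon _ hrβ c
    have hfbs : f bs = c + 1 := by
      revert hfbs'
      rcases (by decide : ∀ u c : ZMod 2, u = c ∨ u = c + 1) (f bs) c with h | h
      · intro hh; exact absurd h hh
      · intro _; exact h
    have hnbs : ¬ near b₁ bs := fun h => hbsβ (near_mem h hb₁β)
    have hiμ : finrank (ZMod q) (span (ZMod q) {b₁, bs}) = 2 :=
      finrank_line (indep_of_not_near hb₁0 hnbs)
    obtain ⟨eμ, heμ⟩ := line_exc hlines (indep_of_not_near hb₁0 hnbs) hfb₁ hfbs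
    have hb₂μ : b₂ ∉ span (ZMod q) {b₁, bs} := fun h =>
      hb₁b₂ (inter_near hiμ hrβ mem_right hbsβ mem_left hb₁β hb₁0 b₂ h hb₂β)
    have hi12 : finrank (ZMod q) (span (ZMod q) {a₁, b₂}) = 2 :=
      finrank_line (indep_of_not_near ha₁0 (hnab a₁ ha₁α b₂ hb₂α))
    have hi22 : finrank (ZMod q) (span (ZMod q) {a₂, b₂}) = 2 :=
      finrank_line (indep_of_not_near ha₂0 (hnab a₂ ha₂α b₂ hb₂α))
    have hne1 : span (ZMod q) {a₁, b₂} ≠ span (ZMod q) {b₁, bs} :=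
      fun h => hb₂μ (h ▸ (mem_right : b₂ ∈ span (ZMod q) {a₁, b₂}))
    obtain ⟨z₁, hz₁0, hz₁ℓ, hz₁μ, -⟩ := inter_line hi12 hiμ hne1
    have hfz₁ : f z₁ = c := hR12 z₁ hz₁ℓ hz₁0 (fun h => hb₂μ (near_mem_rev h hz₁0 hz₁μ))
    have hz₁e : near eμ z₁ := by
      by_contra hn
      exact hcc (hfz₁.symm.trans (heμ z₁ hz₁μ hz₁0 hn))
    have hne2 : span (ZMod q) {a₂, b₂} ≠ span (ZMod q) {b₁, bs} :=
      fun h => hb₂μ (h ▸ (mem_right : b₂ ∈ span (ZMod q) {a₂, b₂}))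
    obtain ⟨z₂, hz₂0, hz₂ℓ, hz₂μ, -⟩ := inter_line hi22 hiμ hne2
    have hfz₂ : f z₂ = c := hR22 z₂ hz₂ℓ hz₂0 (fun h => hb₂μ (near_mem_rev h hz₂0 hz₂μ))
    have hz₂e : near eμ z₂ := by
      by_contra hn
      exact hcc (hfz₂.symm.trans (heμ z₂ hz₂μ hz₂0 hn))
    have hz₂ℓ12 : z₂ ∈ span (ZMod q) {a₁, b₂} := near_mem (near_trans hz₁e hz₂e hz₁0) hz₁ℓ
    have ha₁ℓ22 : a₁ ∉ span (ZMod q) {a₂, b₂} := by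
      intro h
      exact ha₂a₁ (inter_near hi22 hrα mem_right hb₂α mem_left ha₂α ha₂0 a₁ h ha₁α)
    have hzb₂ : near b₂ z₂ :=
      inter_near hi12 hi22 mem_left ha₁ℓ22 mem_right mem_right hb₂0 z₂ hz₂ℓ12 hz₂ℓ
    exact hb₂μ (near_mem_rev hzb₂ hz₂0 hz₂μ)
end Stmt6Aux

open Submodule Module Stmt6Aux in
/-- let `q` be an odd prime and `f` a `ℤ/2`-valued scalar-invariant function
on the nonzero vectors of `F_q³` (i.e. a function on `P²(F_q)`) whose restriction to every
projective line is constant off at most one point. Then `f` is constant off at most one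
projective line. -/
theorem stmt_6 (q : ℕ) [Fact (Nat.Prime q)] (hq2 : q ≠ 2)
    (f : (Fin 3 → ZMod q) → ZMod 2)
    (hinv : ∀ c : ZMod q, c ≠ 0 → ∀ x : Fin 3 → ZMod q, f (c • x) = f x)
    (hlines : ∀ W : Submodule (ZMod q) (Fin 3 → ZMod q), Module.finrank (ZMod q) W = 2 →
      ∃ (x₀ : Fin 3 → ZMod q) (s : ZMod 2),
        ∀ x ∈ W, x ≠ 0 → (¬∃ c : ZMod q, x = c • x₀) → f x = s) :
    ∃ (W : Submodule (ZMod q) (Fin 3 → ZMod q)) (s : ZMod 2),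
      Module.finrank (ZMod q) W = 2 ∧ ∀ x : Fin 3 → ZMod q, x ≠ 0 → x ∉ W → f x = s := by
  classical

  by_contra hcgoal
  push_neg at hcgoal
  -- hcgoal : ∀ W s, finrank = 2 → ∃ x, x ≠ 0 ∧ x ∉ W ∧ f x ≠ s
  have hcon : ∀ W : Submodule (ZMod q) (Fin 3 → ZMod q), Module.finrank (ZMod q) W = 2 →
      ∀ s : ZMod 2, ∃ x, x ≠ 0 ∧ x ∉ W ∧ f x ≠ s := fun W h s => by
    obtain ⟨x, hx⟩ := hcgoal W s h
    exact ⟨x, hx⟩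
  -- a base line
  have hbase : LinearIndependent (ZMod q)
      ![(Pi.single 0 1 : Fin 3 → ZMod q), (Pi.single 1 1 : Fin 3 → ZMod q)] := by
    rw [LinearIndependent.pair_iff]
    intro s t hst
    constructor
    · have h0 := congrFun hst 0
      simpa using h0
    · have h1 := congrFun hst 1
      simpa using h1
  have hW₀ : Module.finrank (ZMod q)
      (span (ZMod q) {(Pi.single 0 1 : Fin 3 → ZMod q), (Pi.single 1 1 : Fin 3 → ZMod q)}) = 2 :=
    finrank_line hbase
  obtain ⟨a, ha0, -, hfa'⟩ := hcon _ hW₀ 1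
  have hfa : f a = 0 := (by decide : ∀ u : ZMod 2, u ≠ 1 → u = 0) _ hfa'
  obtain ⟨b, hb0, -, hfb⟩ := hcon _ hW₀ 0
  -- independent of a
  have hnab : ¬ near a b := by
    rintro ⟨d, hd⟩
    have hd0 : d ≠ 0 := fun h => hb0 (by rw [hd, h, zero_smul])
    have heq : f b = f a := by rw [hd]; exact hinv d hd0 a
    rw [hfa] at heq
    exact hfb heq
  have hfb1 : f b = 1 := (by decide : ∀ u : ZMod 2, u ≠ 0 → u = 1) _ hfb
  have hiab : LinearIndependent (ZMod q) ![a, b] := indep_of_not_near ha0 hnab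
  have hγ : Module.finrank (ZMod q) (span (ZMod q) {a, b}) = 2 := finrank_line hiab
  obtain ⟨u, hu0, huγ, hfu'⟩ := hcon _ hγ 1
  have hfu : f u = 0 := (by decide : ∀ u : ZMod 2, u ≠ 1 → u = 0) _ hfu'
  obtain ⟨v, hv0, hvγ, hfv'⟩ := hcon _ hγ 0
  have hfv : f v = 1 := (by decide : ∀ u : ZMod 2, u ≠ 0 → u = 1) _ hfv'
  have hnau : ¬ near a u := fun h => huγ (near_mem h mem_left)
  have hnbv : ¬ near b v := fun h => hvγ (near_mem h mem_right)
  have hiau : LinearIndependent (ZMod q) ![a, u] := indep_of_not_near ha0 hnau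
  have hibv : LinearIndependent (ZMod q) ![b, v] := indep_of_not_near hb0 hnbv
  -- a is not on the line through b and v
  have haβ : a ∉ span (ZMod q) {b, v} := by
    intro hmem
    rw [Submodule.mem_span_pair] at hmem
    obtain ⟨c₁, c₂, hc'⟩ := hmem
    by_cases h2 : c₂ = 0
    · subst h2
      rw [zero_smul, add_zero] at hc'
      have hc₁0 : c₁ ≠ 0 := fun h => ha0 (by rw [← hc', h, zero_smul])
      have heq : f a = f b := by rw [← hc']; exact hinv c₁ hc₁0 b
      rw [hfa, hfb1] at heq
      exact one_ne_zero heq.symm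
    · apply hvγ
      have hv' : v = c₂⁻¹ • (a - c₁ • b) := by
        rw [← hc', add_sub_cancel_left, smul_smul, inv_mul_cancel₀ h2, one_smul]
      rw [hv']
      exact Submodule.smul_mem _ _
        (Submodule.sub_mem _ mem_left (Submodule.smul_mem _ _ mem_right))
  have hne : span (ZMod q) {a, u} ≠ span (ZMod q) {b, v} :=
    fun h => haβ (h ▸ (mem_left : a ∈ span (ZMod q) {a, u}))
  obtain ⟨x, hx0, hxα, hxβ, -⟩ := inter_line (finrank_line hiau) (finrank_line hibv) hne
  rcases (by decide : ∀ z : ZMod 2, z = 0 ∨ z = 1) (f x) with hfx | hfx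
  · exact aux hq2 hlines hcon 0 hfa hfu (by rw [hfb1]; decide) (by rw [hfv]; decide)
      hiau hibv hx0 hxα hxβ hfx
  · exact aux hq2 hlines hcon 1 hfb1 hfv (by rw [hfa]; decide) (by rw [hfu]; decide)
      hibv hiau hx0 hxβ hxα hfx
end

section
/- There exists a function f̄ : P²(F₂) → Z/2 such that the restriction of f̄ to every projective line in P²(F₂) is an abelian flag function (equivalently: constant on the complement of at most one point of the line), but f̄ itself is not an abelian flag function on (Z/2)³. Concretely: with basis ē₁, ē₂, ē₃, the function with f̄(ē₁+ē₃) = f̄(ē₂+ē₃) = f̄(ē₁+ē₂+ē₃) = 0 and f̄ = 1 on the other four points of P²(F₂) has this property. -/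
/-!
A flag filtration of a finite group has a bottom layer `A \ H`, with `H` a proper subgroup,
on which `f` is constant; hence some fibre of `f` lies in `H`. For the function below both
fibres, `{ē₁, ē₂, ē₃, ē₁+ē₂}` and `{ē₁+ē₃, ē₂+ē₃, ē₁+ē₂+ē₃}`, generate `(ℤ/2)³`, so no such
`H` exists. On a projective line there are only three points and `f` takes two values, so
two of them agree.
-/

theorem ZMod.eq_zero_or_eq_one (z : ZMod 2) : z = 0 ∨ z = 1 := by
  revert z; decide

section Char2

variable {V : Type*} [AddCommGroup V] [Module (ZMod 2) V]

theorem invariantCop_two {S : Type*} (f : V → S) : InvariantCop 2 f := by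
  intro n hn a
  have hn : (n : ZMod 2) = 1 := ZMod.intCast_eq_one_iff_odd.2 (Int.isCoprime_two_right.1 hn)
  rw [← Int.cast_smul_eq_zsmul (ZMod 2), hn, one_smul]

theorem Submodule.exists_forall_mem_eq_of_finrank_eq_two {W : Submodule (ZMod 2) V}
    (hW : Module.finrank (ZMod 2) W = 2) :
    ∃ u v : V, ∀ x ∈ W, x = 0 ∨ x = u ∨ x = v ∨ x = u + v := by
  have : Module.Finite (ZMod 2) W := Module.finite_of_finrank_pos (by omega)
  let b := Module.finBasisOfFinrankEq (ZMod 2) W hW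
  refine ⟨b 0, b 1, fun x hx => ?_⟩
  have hsum := congrArg Subtype.val (b.sum_repr ⟨x, hx⟩)
  simp only [Fin.sum_univ_two, Submodule.coe_add, Submodule.coe_smul] at hsum
  rw [← hsum]
  rcases (b.repr ⟨x, hx⟩ 0).eq_zero_or_eq_one with h0 | h0 <;>
    rcases (b.repr ⟨x, hx⟩ 1).eq_zero_or_eq_one with h1 | h1 <;> simp [h0, h1]

theorem Submodule.exists_const_off_point_of_finrank_eq_two (f : V → ZMod 2)
    {W : Submodule (ZMod 2) V} (hW : Module.finrank (ZMod 2) W = 2) :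
    ∃ (x₀ : V) (s : ZMod 2), ∀ x ∈ W, x ≠ 0 → x ≠ x₀ → f x = s := by
  obtain ⟨u, v, hW⟩ := exists_forall_mem_eq_of_finrank_eq_two hW
  have pigeonhole : ∀ a b c : ZMod 2, a = b ∨ a = c ∨ b = c := by decide
  rcases pigeonhole (f u) (f v) (f (u + v)) with h | h | h
  · refine ⟨u + v, f u, fun x hx hx0 hx₀ => ?_⟩
    rcases hW x hx with rfl | rfl | rfl | rfl <;> first | rfl | contradiction | exact h.symm
  · refine ⟨v, f u, fun x hx hx0 hx₀ => ?_⟩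
    rcases hW x hx with rfl | rfl | rfl | rfl <;> first | rfl | contradiction | exact h.symm
  · refine ⟨u, f v, fun x hx hx0 hx₀ => ?_⟩
    rcases hW x hx with rfl | rfl | rfl | rfl <;> first | rfl | contradiction | exact h.symm

end Char2

theorem HasFlagFiltration.exists_ne_top_eq_of_notMem {A S : Type*} [AddCommGroup A] [Finite A]
    [Nontrivial A] {f : A → S} (hf : HasFlagFiltration f) :
    ∃ H : AddSubgroup A, H ≠ ⊤ ∧ ∀ x y, x ∉ H → y ∉ H → f x = f y := by
  obtain ⟨I, lo, F, hex, hlt, hconst⟩ := hf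
  let := lo
  have hF : StrictAnti F := hlt
  have : Finite I :=
    Finite.of_injective (fun i => (F i : Set A)) fun _ _ h => hF.injective (SetLike.coe_injective h)
  have : Nonempty I := let ⟨i, _⟩ := hex 0; ⟨i⟩
  obtain ⟨i₀, hi₀⟩ := Finite.exists_min (id : I → I)
  have hmem : ∀ x, x ∈ F i₀ := fun x => let ⟨i, hi⟩ := hex x; hF.antitone (hi₀ i) hi
  have htop : F i₀ = ⊤ := eq_top_iff.2 fun x _ => hmem x
  by_cases hsucc : ∃ j, i₀ < j
  · obtain ⟨j, hj⟩ := hsucc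
    have : Nonempty {j // i₀ < j} := ⟨⟨j, hj⟩⟩
    obtain ⟨⟨i₁, hi₁⟩, hmin⟩ := Finite.exists_min (id : {j // i₀ < j} → {j // i₀ < j})
    refine ⟨F i₁, htop ▸ (hF hi₁).ne, fun x y hx hy => hconst i₀ x y (hmem x) ?_ (hmem y) ?_⟩
    · exact fun j hj hxj => hx (hF.antitone (hmin ⟨j, hj⟩) hxj)
    · exact fun j hj hyj => hy (hF.antitone (hmin ⟨j, hj⟩) hyj)
  · simp only [not_exists, not_lt] at hsucc
    refine ⟨⊥, bot_ne_top, fun x y _ _ => hconst i₀ x y (hmem x) ?_ (hmem y) ?_⟩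
    all_goals exact fun j hj => absurd (hsucc j) (not_le.2 hj)

theorem not_hasFlagFiltration_of_closure_eq_top {A S : Type*} [AddCommGroup A] [Finite A]
    [Nontrivial A] {f : A → S} (hf : ∀ s, AddSubgroup.closure {x | f x ≠ s} = ⊤) :
    ¬ HasFlagFiltration f := by
  intro hflag
  obtain ⟨H, hH, hconst⟩ := hflag.exists_ne_top_eq_of_notMem
  obtain ⟨w, -, hw⟩ := SetLike.exists_of_lt (lt_top_iff_ne_top.2 hH)
  refine hH (eq_top_iff.2 ((hf (f w)).ge.trans ((AddSubgroup.closure_le H).2 fun x hx => ?_)))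
  by_contra hxH
  exact hx (hconst x w hxH hw)

theorem AddSubgroup.closure_eq_top_of_single_mem {n : ℕ} {s : Set (Fin n → ZMod 2)}
    (hs : ∀ i, Pi.single i 1 ∈ AddSubgroup.closure s) : AddSubgroup.closure s = ⊤ := by
  refine eq_top_iff.2 fun x _ => ?_
  rw [← Finset.univ_sum_single x]
  refine AddSubgroup.sum_mem _ fun i _ => ?_
  rcases (x i).eq_zero_or_eq_one with h | h <;> simp [h, hs i]

def counterexample : (Fin 3 → ZMod 2) → ZMod 2 := fun x =>
  if x = ![1, 0, 1] ∨ x = ![0, 1, 1] ∨ x = ![1, 1, 1] then 0 else 1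

theorem closure_counterexample_ne_eq_top (s : ZMod 2) :
    AddSubgroup.closure {x | counterexample x ≠ s} = ⊤ := by
  refine AddSubgroup.closure_eq_top_of_single_mem fun i => ?_
  rcases s.eq_zero_or_eq_one with rfl | rfl
  · exact AddSubgroup.subset_closure (by fin_cases i <;> decide)
  · have mem (x) (hx : counterexample x = 0) : x ∈ AddSubgroup.closure {x | counterexample x ≠ 1} :=
      AddSubgroup.subset_closure (by simp [hx])
    have ha := mem ![1, 0, 1] (by decide)
    have hb := mem ![0, 1, 1] (by decide)
    have hc := mem ![1, 1, 1] (by decide)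
    fin_cases i
    · convert add_mem hb hc using 1; decide
    · convert add_mem ha hc using 1; decide
    · convert add_mem (add_mem ha hb) hc using 1; decide

/-- there is a function on `P²(F₂)` (equivalently, on `(ℤ/2)³`) whose
restriction to every projective line is constant off at most one point (hence an abelian
flag function on every line), but which is not an abelian flag function on `(ℤ/2)³`;
concretely the function vanishing exactly at `ē₁+ē₃, ē₂+ē₃, ē₁+ē₂+ē₃`. -/
theorem stmt_7 :
    ∃ f : (Fin 3 → ZMod 2) → ZMod 2,
      (∀ W : Submodule (ZMod 2) (Fin 3 → ZMod 2), Module.finrank (ZMod 2) W = 2 →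
        ∃ (x₀ : Fin 3 → ZMod 2) (s : ZMod 2), ∀ x ∈ W, x ≠ 0 → x ≠ x₀ → f x = s) ∧
      InvariantCop 2 f ∧ ¬ HasFlagFiltration f ∧
      (f (Pi.single 0 1 + Pi.single 2 1) = 0 ∧
       f (Pi.single 1 1 + Pi.single 2 1) = 0 ∧
       f (Pi.single 0 1 + Pi.single 1 1 + Pi.single 2 1) = 0 ∧
       f (Pi.single 0 1) = 1 ∧ f (Pi.single 1 1) = 1 ∧ f (Pi.single 2 1) = 1 ∧
       f (Pi.single 0 1 + Pi.single 1 1) = 1) :=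
  ⟨counterexample, fun _ => Submodule.exists_const_off_point_of_finrank_eq_two counterexample,
    invariantCop_two counterexample,
    not_hasFlagFiltration_of_closure_eq_top closure_counterexample_ne_eq_top,
    by decide, by decide, by decide, by decide, by decide, by decide, by decide⟩
end

section
/- Let A be an abelian group (torsion-free or an F_q-vector space, q odd), S a set, and f : A → S a function. If for every map h : S → Z/4 the composed function h ∘ f is an abelian flag function on A with values in Z/4, then f itself is an abelian flag function on A. -/
/-- Abelian flag function on a possibly infinitely generated group: the restriction to
every finitely generated subgroup is an abelian flag function. -/
def IsAFgen {A : Type*} [AddCommGroup A] {S : Type*} (f : A → S) : Prop :=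
  InvariantZ f ∧
    ∀ B : AddSubgroup A, B.FG → HasFlagFiltration (fun b : B => f (b : A))

private lemma exists_notMem_pair {A : Type*} [AddCommGroup A] {D C H : AddSubgroup A}
    (hC : C < D) (hH : H < D) : ∃ x : A, x ∈ D ∧ x ∉ C ∧ x ∉ H := by
  obtain ⟨a, haD, haC⟩ := SetLike.exists_of_lt hC
  obtain ⟨b, hbD, hbH⟩ := SetLike.exists_of_lt hH
  by_cases h1 : a ∈ H
  · by_cases h2 : b ∈ C
    · refine ⟨a + b, D.add_mem haD hbD, fun hc => haC ?_, fun hh => hbH ?_⟩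
      · simpa using C.sub_mem hc h2
      · simpa using H.sub_mem hh h1
    · exact ⟨b, hbD, h2, hbH⟩
  · exact ⟨a, haD, haC, h1⟩

private lemma topLayer {G : Type*} [AddCommGroup G] [Nontrivial G] {T : Type*}
    (fg : AddGroup.FG G) (g : G → T) (hg : HasFlagFiltration g) :
    ∃ C : AddSubgroup G, C ≠ ⊤ ∧ ∀ x y : G, x ∉ C → y ∉ C → g x = g y := by
  classical
  obtain ⟨I, lo, F, hex, hstr, hcon⟩ := hg
  letI := lo
  have hmono : ∀ {i j : I}, i ≤ j → F j ≤ F i := by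
    intro i j hij
    rcases eq_or_lt_of_le hij with rfl | h
    · exact le_rfl
    · exact (hstr _ _ h).le
  obtain ⟨Sg, hSgen, hSfin⟩ := AddGroup.fg_iff.1 fg
  have hSne : Sg.Nonempty := by
    rcases Set.eq_empty_or_nonempty Sg with rfl | h
    · exfalso
      rw [AddSubgroup.closure_empty] at hSgen
      obtain ⟨x, hx⟩ := exists_ne (0 : G)
      exact hx (by simpa [← hSgen] using AddSubgroup.mem_top x)
    · exact h
  choose idx hidx using hex
  -- minimum index containing all generators
  have hfin : (idx '' Sg).Finite := hSfin.image idx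
  set Fs : Finset I := hfin.toFinset with hFs
  have hFsne : Fs.Nonempty := by
    simpa [hFs] using (hSne.image idx)
  set i₀ : I := Fs.min' hFsne with hi₀
  have hFtop : F i₀ = ⊤ := by
    rw [eq_top_iff, ← hSgen, AddSubgroup.closure_le]
    intro s hs
    have : idx s ∈ Fs := by simp [hFs]; exact ⟨s, hs, rfl⟩
    have hle : i₀ ≤ idx s := Fs.min'_le _ this
    exact hmono hle (hidx s)
  set C : AddSubgroup G := ⨆ j : {j : I // i₀ < j}, F j.1 with hC
  have hdir : Directed (· ≤ ·) (fun j : {j : I // i₀ < j} => F j.1) := by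
    intro j k
    rcases le_total j.1 k.1 with h | h
    · exact ⟨j, le_rfl, hmono h⟩
    · exact ⟨k, hmono h, le_rfl⟩
  refine ⟨C, ?_, ?_⟩
  · intro hCtop
    by_cases hne : Nonempty {j : I // i₀ < j}
    · have hJ : ∀ s : G, s ∈ Sg → ∃ j : I, i₀ < j ∧ s ∈ F j := by
        intro s hs
        have : s ∈ C := hCtop ▸ AddSubgroup.mem_top s
        rw [hC] at this
        obtain ⟨j, hj⟩ := (AddSubgroup.mem_iSup_of_directed hdir).1 this
        exact ⟨j.1, j.2, hj⟩
      set J : G → I := fun s => if h : s ∈ Sg then (hJ s h).choose else i₀ with hJdef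
      have hJ1 : ∀ s ∈ Sg, i₀ < J s := by
        intro s hs; rw [hJdef]; simp only [dif_pos hs]; exact (hJ s hs).choose_spec.1
      have hJ2 : ∀ s ∈ Sg, s ∈ F (J s) := by
        intro s hs; rw [hJdef]; simp only [dif_pos hs]; exact (hJ s hs).choose_spec.2
      have hfin2 : (J '' Sg).Finite := Set.Finite.image J hSfin
      have hne2 : hfin2.toFinset.Nonempty := by
        simpa using hSne.image J
      set j₁ : I := hfin2.toFinset.min' hne2 with hj₁
      obtain ⟨s₁, hs₁, hjs₁⟩ : ∃ s ∈ Sg, J s = j₁ := by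
        have := hfin2.toFinset.min'_mem hne2
        simpa [hj₁] using this
      have hj₁gt : i₀ < j₁ := hjs₁ ▸ hJ1 s₁ hs₁
      have hFj₁ : F j₁ = ⊤ := by
        rw [eq_top_iff, ← hSgen, AddSubgroup.closure_le]
        intro s hs
        have hmem : J s ∈ hfin2.toFinset := by simp; exact ⟨s, hs, rfl⟩
        exact hmono (hfin2.toFinset.min'_le _ hmem) (hJ2 s hs)
      have := hstr i₀ j₁ hj₁gt
      rw [hFj₁, hFtop] at this
      exact lt_irrefl _ this
    · haveI : IsEmpty {j : I // i₀ < j} := not_nonempty_iff.1 hne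
      rw [hC, iSup_of_empty] at hCtop
      obtain ⟨x, hx⟩ := exists_ne (0 : G)
      have hxb : x ∈ (⊥ : AddSubgroup G) := by rw [hCtop]; exact AddSubgroup.mem_top x
      exact hx (by simpa using hxb)
  · intro x y hx hy
    refine hcon i₀ x y (hFtop ▸ AddSubgroup.mem_top x) ?_ (hFtop ▸ AddSubgroup.mem_top y) ?_
    · intro j hj hxj
      exact hx (hC ▸ le_iSup (fun j : {j : I // i₀ < j} => F j.1) ⟨j, hj⟩ hxj)
    · intro j hj hyj
      exact hy (hC ▸ le_iSup (fun j : {j : I // i₀ < j} => F j.1) ⟨j, hj⟩ hyj)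

private lemma fg_of_le' {A : Type*} [AddCommGroup A] {B H : AddSubgroup A}
    (hB : B.FG) (hle : H ≤ B) : H.FG := by
  haveI : Module.Finite ℤ ↥B :=
    Module.Finite.iff_addGroup_fg.2 ((AddGroup.fg_iff_addSubgroup_fg B).2 hB)
  haveI : IsNoetherian ℤ ↥B := isNoetherian_of_isNoetherianRing_of_finite ℤ ↥B
  have h1 : (AddSubgroup.toIntSubmodule (H.addSubgroupOf B)).FG := IsNoetherian.noetherian _
  have h2 : (H.addSubgroupOf B).FG := by
    have := (Submodule.fg_iff_addSubgroup_fg _).1 h1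
    simpa using this
  haveI : AddGroup.FG ↥(H.addSubgroupOf B) := (AddGroup.fg_iff_addSubgroup_fg _).2 h2
  have he : ↥(H.addSubgroupOf B) ≃+ ↥H := AddSubgroup.addSubgroupOfEquivOfLe hle
  have : AddGroup.FG ↥H := AddGroup.fg_of_surjective (f := he.toAddMonoidHom)
    he.surjective
  exact (AddGroup.fg_iff_addSubgroup_fg H).1 this

private lemma addSubgroupOf_lt' {A : Type*} [AddCommGroup A] {D M H : AddSubgroup A}
    (hH : H ≤ D) (h : M < H) : M.addSubgroupOf D < H.addSubgroupOf D := by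
  have hM : M ≤ D := h.le.trans hH
  constructor
  · intro x hx
    exact AddSubgroup.mem_addSubgroupOf.2 (h.le (AddSubgroup.mem_addSubgroupOf.1 hx))
  · intro hcon
    obtain ⟨a, haH, haM⟩ := SetLike.exists_of_lt h
    have : (⟨a, hH haH⟩ : ↥D) ∈ H.addSubgroupOf D := AddSubgroup.mem_addSubgroupOf.2 haH
    exact haM (AddSubgroup.mem_addSubgroupOf.1 (hcon this))

private lemma exists_maximal' {A : Type*} [AddCommGroup A] {D : AddSubgroup A} (hD : D.FG)
    (Q : Set (AddSubgroup A)) (hQle : ∀ H ∈ Q, H ≤ D) (hQne : Q.Nonempty) :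
    ∃ M ∈ Q, ∀ H ∈ Q, ¬ M < H := by
  haveI : Module.Finite ℤ ↥D :=
    Module.Finite.iff_addGroup_fg.2 ((AddGroup.fg_iff_addSubgroup_fg D).2 hD)
  haveI : IsNoetherian ℤ ↥D := isNoetherian_of_isNoetherianRing_of_finite ℤ ↥D
  have wf : WellFounded ((· > ·) : Submodule ℤ ↥D → Submodule ℤ ↥D → Prop) :=
    IsNoetherian.wf inferInstance
  set e : AddSubgroup A → Submodule ℤ ↥D :=
    fun H => AddSubgroup.toIntSubmodule (H.addSubgroupOf D) with he
  obtain ⟨M', hM'Q, hmax⟩ := wf.has_min (e '' Q) (hQne.image e)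
  obtain ⟨M, hMQ, rfl⟩ := hM'Q
  refine ⟨M, hMQ, ?_⟩
  intro H hH hlt
  refine hmax (e H) ⟨H, hH, rfl⟩ ?_
  have : M.addSubgroupOf D < H.addSubgroupOf D := addSubgroupOf_lt' (hQle H hH) hlt
  exact (AddSubgroup.toIntSubmodule).lt_iff_lt.2 this

private lemma exists_const_layer {A : Type*} {S : Type*} [AddCommGroup A] (f : A → S)
    (H4 : ∀ (h' : S → ZMod 4) (E : AddSubgroup A), E.FG →
      HasFlagFiltration (fun x : E => h' (f (x : A))))
    (D : AddSubgroup A) (hfg : D.FG) (hD : D ≠ ⊥) :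
    ∃ C : AddSubgroup A, C < D ∧
      ∀ x y : A, x ∈ D → x ∉ C → y ∈ D → y ∉ C → f x = f y := by
  classical
  haveI : Nontrivial ↥D := (AddSubgroup.nontrivial_iff_ne_bot D).2 hD
  have hDfg : AddGroup.FG ↥D := (AddGroup.fg_iff_addSubgroup_fg D).2 hfg
  -- Step 1 : for every 4-colouring there is a proper subgroup outside which it is constant
  have step1 : ∀ h' : S → ZMod 4, ∃ C : AddSubgroup A, C < D ∧
      ∀ x y : A, x ∈ D → x ∉ C → y ∈ D → y ∉ C → h' (f x) = h' (f y) := by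
    intro h'
    obtain ⟨C', hC'top, hC'con⟩ := topLayer hDfg (fun x : ↥D => h' (f (x : A))) (H4 h' D hfg)
    refine ⟨C'.map D.subtype, ?_, ?_⟩
    · refine lt_of_le_of_ne ?_ ?_
      · rintro x hx
        obtain ⟨y, _, rfl⟩ := hx
        exact y.2
      · intro heq
        apply hC'top
        ext d
        simp only [AddSubgroup.mem_top, iff_true]
        have : (d : A) ∈ C'.map D.subtype := by rw [heq]; exact d.2
        obtain ⟨c, hc, hcd⟩ := this
        have : c = d := Subtype.coe_injective hcd
        exact this ▸ hc
    · intro x y hxD hxC hyD hyC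
      have hx' : (⟨x, hxD⟩ : ↥D) ∉ C' := fun hm => hxC ⟨⟨x, hxD⟩, hm, rfl⟩
      have hy' : (⟨y, hyD⟩ : ↥D) ∉ C' := fun hm => hyC ⟨⟨y, hyD⟩, hm, rfl⟩
      exact hC'con _ _ hx' hy'
  -- Step 2 : dichotomy for each possible value
  have step2 : ∀ s : S,
      (∃ C : AddSubgroup A, C < D ∧ ∀ x, x ∈ D → x ∉ C → f x = s) ∨
      (∃ W : AddSubgroup A, W < D ∧ ∀ x, x ∈ D → x ∉ W → f x ≠ s) := by
    intro s
    obtain ⟨C, hCD, hcon⟩ := step1 (fun t => if t = s then 0 else 1)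
    obtain ⟨z, hzD, hzC⟩ := SetLike.exists_of_lt hCD
    by_cases hz : f z = s
    · left
      refine ⟨C, hCD, fun x hx hxC => ?_⟩
      have := hcon x z hx hxC hzD hzC
      simp only [hz, if_pos rfl] at this
      by_contra hne
      rw [if_neg hne] at this
      exact absurd this (by decide)
    · right
      refine ⟨C, hCD, fun x hx hxC => ?_⟩
      have := hcon x z hx hxC hzD hzC
      rw [if_neg hz] at this
      intro hne
      rw [if_pos hne] at this
      exact absurd this (by decide)
  by_cases hbig : ∃ s : S, ∃ C : AddSubgroup A, C < D ∧ ∀ x, x ∈ D → x ∉ C → f x = s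
  · obtain ⟨s, C, hCD, hcon⟩ := hbig
    exact ⟨C, hCD, fun x y hx hxC hy hyC => (hcon x hx hxC).trans (hcon y hy hyC).symm⟩
  exfalso
  push_neg at hbig
  have hsmall : ∀ s : S, ∃ W : AddSubgroup A, W < D ∧ ∀ x, x ∈ D → x ∉ W → f x ≠ s := by
    intro s
    rcases step2 s with ⟨C, hCD, hcon⟩ | h
    · exact absurd hcon (by simpa using hbig s C hCD)
    · exact h
  choose Wsm hWlt hWcon using hsmall
  -- the family of proper subgroups generated by unions of level sets
  set Q : Set (AddSubgroup A) :=
    {H | H < D ∧ ∃ V : Set S, H = AddSubgroup.closure {x | x ∈ D ∧ f x ∈ V}} with hQ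
  have hQne : Q.Nonempty := by
    refine ⟨⊥, bot_lt_iff_ne_bot.2 hD, ∅, ?_⟩
    rw [show {x | x ∈ D ∧ f x ∈ (∅ : Set S)} = ∅ by ext; simp, AddSubgroup.closure_empty]
  obtain ⟨M, hMQ, hMmax⟩ := exists_maximal' hfg Q (fun H hH => hH.1.le) hQne
  obtain ⟨hMD, V, hMV⟩ := hMQ
  obtain ⟨x₀, hx₀D, hx₀M⟩ := SetLike.exists_of_lt hMD
  set s : S := f x₀ with hs
  set h' : S → ZMod 4 := fun v => if v ∈ V then 1 else if v = s then 2 else 0 with hh'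
  obtain ⟨C, hCD, hcon⟩ := step1 h'
  obtain ⟨x₁, hx₁D, hx₁C, hx₁M⟩ := exists_notMem_pair hCD hMD
  obtain ⟨x₂, hx₂D, hx₂C, hx₂W⟩ := exists_notMem_pair hCD (hWlt s)
  have hfx₁V : f x₁ ∉ V := fun hv =>
    hx₁M (hMV ▸ AddSubgroup.subset_closure ⟨hx₁D, hv⟩)
  have hfx₂s : f x₂ ≠ s := hWcon s x₂ hx₂D hx₂W
  have heq : h' (f x₁) = h' (f x₂) := hcon _ _ hx₁D hx₁C hx₂D hx₂C
  have h0 : h' (f x₁) = 0 := by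
    rw [hh']
    simp only [if_neg hfx₁V]
    by_cases h1 : f x₁ = s
    · exfalso
      rw [hh'] at heq
      simp only [if_neg hfx₁V, if_pos h1, if_neg hfx₂s] at heq
      by_cases h2 : f x₂ ∈ V
      · rw [if_pos h2] at heq; exact absurd heq (by decide)
      · rw [if_neg h2] at heq; exact absurd heq (by decide)
    · rw [if_neg h1]
  have hval : ∀ x, x ∈ D → x ∉ C → h' (f x) = 0 := fun x hx hxc =>
    (hcon x x₁ hx hxc hx₁D hx₁C).trans h0
  have hsub : {x | x ∈ D ∧ f x ∈ V ∪ {s}} ⊆ (C : Set A) := by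
    rintro x ⟨hxD, hfx⟩
    by_contra hxC
    have h00 : (if f x ∈ V then (1:ZMod 4) else if f x = s then (2:ZMod 4) else 0) = 0 :=
      hval x hxD hxC
    rcases hfx with hv | hsx
    · rw [if_pos hv] at h00; exact absurd h00 (by decide)
    · have hxs : f x = s := hsx
      by_cases hv : f x ∈ V
      · rw [if_pos hv] at h00; exact absurd h00 (by decide)
      · rw [if_neg hv, if_pos hxs] at h00; exact absurd h00 (by decide)
  set H' : AddSubgroup A := AddSubgroup.closure {x | x ∈ D ∧ f x ∈ V ∪ {s}} with hH'
  have hH'C : H' ≤ C := (AddSubgroup.closure_le C).2 hsub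
  have hH'Q : H' ∈ Q := ⟨lt_of_le_of_lt hH'C hCD, V ∪ {s}, rfl⟩
  have hMH' : M < H' := by
    refine lt_of_le_of_ne ?_ ?_
    · rw [hMV]
      exact AddSubgroup.closure_mono (fun x hx => ⟨hx.1, Or.inl hx.2⟩)
    · intro hcontra
      apply hx₀M
      rw [hcontra]
      exact AddSubgroup.subset_closure ⟨hx₀D, Or.inr rfl⟩
  exact hMmax H' hH'Q hMH'

private lemma main_flag {A : Type*} {S : Type*} [AddCommGroup A] (f : A → S)
    (B : AddSubgroup A) (hB : B.FG)
    (H4 : ∀ (h' : S → ZMod 4) (E : AddSubgroup A), E.FG →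
      HasFlagFiltration (fun x : E => h' (f (x : A)))) :
    HasFlagFiltration (fun b : B => f (b : A)) := by
  classical
  by_cases hBbot : B = ⊥
  · subst hBbot
    refine ⟨PUnit, inferInstance, fun _ => ⊤,
      fun a => ⟨PUnit.unit, AddSubgroup.mem_top a⟩, ?_, ?_⟩
    · intro i j hij
      rw [Subsingleton.elim i j] at hij
      exact absurd hij (lt_irrefl j)
    · intro i x y _ _ _ _
      have hx0 : (x : A) = 0 := AddSubgroup.mem_bot.1 x.2
      have hy0 : (y : A) = 0 := AddSubgroup.mem_bot.1 y.2
      show f (x : A) = f (y : A)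
      rw [hx0, hy0]
  -- the one-step constancy operator
  have Nspec : ∀ D : AddSubgroup A, D ≤ B → D ≠ ⊥ →
      ∃ C, C < D ∧ ∀ x y : A, x ∈ D → x ∉ C → y ∈ D → y ∉ C → f x = f y :=
    fun D hle hne => exists_const_layer f H4 D (fg_of_le' hB hle) hne
  set N : AddSubgroup A → AddSubgroup A :=
    fun D => if h : D ≤ B ∧ D ≠ ⊥ then (Nspec D h.1 h.2).choose else ⊥ with hN
  have hNlt : ∀ D, D ≤ B → D ≠ ⊥ → N D < D := by
    intro D h1 h2
    rw [hN]; simp only [dif_pos (And.intro h1 h2)]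
    exact (Nspec D h1 h2).choose_spec.1
  have hNcon : ∀ D (h1 : D ≤ B) (h2 : D ≠ ⊥),
      ∀ x y : A, x ∈ D → x ∉ N D → y ∈ D → y ∉ N D → f x = f y := by
    intro D h1 h2
    have hrw : N D = (Nspec D h1 h2).choose := by
      rw [hN]; simp only [dif_pos (And.intro h1 h2)]
    rw [hrw]
    exact (Nspec D h1 h2).choose_spec.2
  have hNle : ∀ D, N D ≤ D := by
    intro D
    rw [hN]
    by_cases h : D ≤ B ∧ D ≠ ⊥
    · simp only [dif_pos h]; exact (Nspec D h.1 h.2).choose_spec.1.le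
    · simp only [dif_neg h]; exact bot_le
  have hNbot : N ⊥ = ⊥ := by
    rw [hN]; simp
  -- transfinite iteration along a big well-order
  set r : Set (Set A) → Set (Set A) → Prop := WellOrderingRel with hr
  have wf : WellFounded r := IsWellFounded.wf
  set Φ : Set (Set A) → AddSubgroup A :=
    wf.fix (fun i rec => N (B ⊓ ⨅ j : {j // r j i}, rec j.1 j.2)) with hΦdef
  set D' : Set (Set A) → AddSubgroup A :=
    fun i => B ⊓ ⨅ j : {j // r j i}, Φ j.1 with hD'
  have hΦ : ∀ i, Φ i = N (D' i) := by
    intro i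
    rw [hD', hΦdef]
    exact wf.fix_eq _ i
  have hD'leB : ∀ i, D' i ≤ B := fun i => by rw [hD']; exact inf_le_left
  have hΦleB : ∀ i, Φ i ≤ B := fun i => by
    rw [hΦ i]; exact (hNle _).trans (hD'leB i)
  have hD'leΦ : ∀ {j i}, r j i → D' i ≤ Φ j := by
    intro j i hji
    rw [hD']
    exact inf_le_right.trans (iInf_le (fun j : {j // r j i} => Φ j.1) ⟨j, hji⟩)
  have hmono : ∀ {j i}, r j i → Φ i ≤ Φ j := by
    intro j i hji
    rw [hΦ i]
    exact (hNle _).trans (hD'leΦ hji)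
  have htri : ∀ i j : Set (Set A), r i j ∨ i = j ∨ r j i := fun i j => trichotomous i j
  -- the iteration reaches ⊥
  have hbot : ∃ i, Φ i = ⊥ := by
    by_contra hc
    push_neg at hc
    have hstrict : ∀ j i, r j i → Φ i < Φ j := by
      intro j i hji
      have hne : D' i ≠ ⊥ := by
        intro hb
        exact hc i (by rw [hΦ i, hb, hNbot])
      calc Φ i = N (D' i) := hΦ i
        _ < D' i := hNlt (D' i) (hD'leB i) hne
        _ ≤ Φ j := hD'leΦ hji
    have hinj : Function.Injective (fun i => ((Φ i : AddSubgroup A) : Set A)) := by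
      intro i j hij
      have hij' : Φ i = Φ j := SetLike.coe_injective hij
      rcases htri i j with h | h | h
      · exact absurd (hij' ▸ hstrict i j h) (lt_irrefl _)
      · exact h
      · exact absurd (hij' ▸ hstrict j i h) (lt_irrefl _)
    exact Function.cantor_injective _ hinj
  obtain ⟨i₀, hi₀⟩ := hbot
  set CC : Set (AddSubgroup A) := insert B (Set.range Φ) with hCC
  have hBCC : B ∈ CC := Set.mem_insert _ _
  have hCCle : ∀ C ∈ CC, C ≤ B := by
    rintro C (rfl | ⟨i, rfl⟩)
    · exact le_rfl
    · exact hΦleB i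
  have hchain : ∀ C ∈ CC, ∀ C' ∈ CC, C ≤ C' ∨ C' ≤ C := by
    rintro C (rfl | ⟨i, rfl⟩) C' (rfl | ⟨j, rfl⟩)
    · exact Or.inl le_rfl
    · exact Or.inr (hΦleB j)
    · exact Or.inl (hΦleB i)
    · rcases htri i j with h | h | h
      · exact Or.inr (hmono h)
      · exact Or.inl (h ▸ le_rfl)
      · exact Or.inl (hmono h)
  -- every nontrivial member of the chain has a successor with constancy in between
  have hsucc : ∀ C ∈ CC, C ≠ ⊥ → ∃ C' ∈ CC, C' < C ∧
      ∀ x y : A, x ∈ C → x ∉ C' → y ∈ C → y ∉ C' → f x = f y := by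
    intro C hCmem hCne
    rcases Set.mem_insert_iff.1 hCmem with hCB | ⟨i, hCi⟩
    · subst hCB
      -- C = B : use the minimum of the well-order
      set imin := wf.min Set.univ ⟨i₀, Set.mem_univ i₀⟩ with himin
      haveI : IsEmpty {j // r j imin} :=
        ⟨fun j => wf.not_lt_min Set.univ (Set.mem_univ j.1) j.2⟩
      have hDmin : D' imin = C := by
        show C ⊓ ⨅ j : {j // r j imin}, Φ j.1 = C
        rw [iInf_of_empty]
        exact inf_top_eq C
      refine ⟨Φ imin, Set.mem_insert_iff.2 (Or.inr ⟨imin, rfl⟩), ?_, ?_⟩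
      · rw [hΦ imin, hDmin]
        exact hNlt C le_rfl hCne
      · intro x y hx hx' hy hy'
        rw [hΦ imin, hDmin] at hx' hy'
        exact hNcon C le_rfl hCne x y hx hx' hy hy'
    · subst hCi
      -- C = Φ i with Φ i ≠ ⊥
      set T : Set (Set (Set A)) := {j | Φ j < Φ i} with hT
      have hTne : T.Nonempty := ⟨i₀, by rw [Set.mem_setOf_eq, hi₀]; exact bot_lt_iff_ne_bot.2 hCne⟩
      set jm := wf.min T hTne with hjm
      have hjmT : Φ jm < Φ i := wf.min_mem T hTne
      have hijm : r i jm := by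
        rcases htri i jm with h | h | h
        · exact h
        · exact absurd (h ▸ hjmT) (lt_irrefl _)
        · exact absurd (lt_of_lt_of_le hjmT (hmono h)) (lt_irrefl _)
      have hDjm : D' jm = Φ i := by
        refine le_antisymm (hD'leΦ hijm) ?_
        rw [hD']
        refine le_inf (hΦleB i) (le_iInf ?_)
        rintro ⟨j, hj⟩
        rcases htri j i with h | h | h
        · exact hmono h
        · exact h ▸ le_rfl
        · -- r i j and r j jm : j is before jm, so Φ j is not < Φ i, but Φ j ≤ Φ i
          have hle : Φ j ≤ Φ i := hmono h
          have hnlt : ¬ Φ j < Φ i := fun hlt => wf.not_lt_min T hlt hj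
          have : Φ j = Φ i := le_antisymm hle (le_of_eq (by
            rcases eq_or_lt_of_le hle with he | hl
            · exact he.symm
            · exact absurd hl hnlt))
          exact this ▸ le_rfl
      refine ⟨Φ jm, Set.mem_insert_iff.2 (Or.inr ⟨jm, rfl⟩), ?_, ?_⟩
      · exact hjmT
      · intro x y hx hx' hy hy'
        have hrw : Φ jm = N (Φ i) := by rw [hΦ jm, hDjm]
        rw [hrw] at hx' hy'
        exact hNcon (Φ i) (hΦleB i) hCne x y hx hx' hy hy'
  -- encode the chain inside ℝ
  haveI : Module.Finite ℤ ↥B :=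
    Module.Finite.iff_addGroup_fg.2 ((AddGroup.fg_iff_addSubgroup_fg B).2 hB)
  obtain ⟨n, π, hπ⟩ := Module.Finite.exists_fin' ℤ ↥B
  haveI : Countable ↥B := hπ.countable
  obtain ⟨enc, henc⟩ := Countable.exists_injective_nat ↥B
  set g : AddSubgroup A → ↥B → ℝ :=
    fun C b => if (b : A) ∈ C then ((1:ℝ)/3) ^ (enc b) else 0 with hg
  have hbase : Summable (fun n : ℕ => ((1:ℝ)/3) ^ n) :=
    summable_geometric_of_lt_one (by norm_num) (by norm_num)
  have hcomp : Summable (fun b : ↥B => ((1:ℝ)/3) ^ (enc b)) := hbase.comp_injective henc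
  have hgsum : ∀ C, Summable (g C) := by
    intro C
    refine Summable.of_nonneg_of_le (fun b => ?_) (fun b => ?_) hcomp
    · rw [hg]; dsimp only; split
      · positivity
      · exact le_rfl
    · rw [hg]; dsimp only; split
      · exact le_rfl
      · positivity
  set ρ : AddSubgroup A → ℝ := fun C => -∑' b, g C b with hρ
  have hρlt : ∀ C C' : AddSubgroup A, C' ≤ B → C < C' → ρ C' < ρ C := by
    intro C C' hC'B hlt
    have hpt : ∀ b : ↥B, g C b ≤ g C' b := by
      intro b
      rw [hg]; dsimp only
      by_cases hb : (b : A) ∈ C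
      · rw [if_pos hb, if_pos (hlt.le hb)]
      · rw [if_neg hb]; split
        · positivity
        · exact le_rfl
    obtain ⟨a, haC', haC⟩ := SetLike.exists_of_lt hlt
    have hb₀ : g C ⟨a, hC'B haC'⟩ < g C' ⟨a, hC'B haC'⟩ := by
      rw [hg]; dsimp only
      rw [if_neg haC, if_pos haC']
      positivity
    have hsumlt := Summable.tsum_lt_tsum hpt hb₀ (hgsum C) (hgsum C')
    rw [hρ]; dsimp only
    exact neg_lt_neg hsumlt
  have hρinj : ∀ C ∈ CC, ∀ C' ∈ CC, ρ C = ρ C' → C = C' := by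
    intro C hC C' hC' hρeq
    rcases hchain C hC C' hC' with h | h
    · rcases eq_or_lt_of_le h with h' | h'
      · exact h'
      · exact absurd (hρeq ▸ hρlt C C' (hCCle C' hC') h') (lt_irrefl _)
    · rcases eq_or_lt_of_le h with h' | h'
      · exact h'.symm
      · exact absurd (hρeq ▸ hρlt C' C (hCCle C hC) h') (lt_irrefl _)
  have hmemI : ∀ i : {x : ℝ // x ∈ ρ '' CC}, ∃ C, C ∈ CC ∧ ρ C = i.1 := fun i => i.2
  set pick : {x : ℝ // x ∈ ρ '' CC} → AddSubgroup A := fun i => (hmemI i).choose with hpick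
  have hpickCC : ∀ i, pick i ∈ CC := fun i => (hmemI i).choose_spec.1
  have hpickρ : ∀ i, ρ (pick i) = i.1 := fun i => (hmemI i).choose_spec.2
  have hpickuniq : ∀ (i : {x : ℝ // x ∈ ρ '' CC}) (C), C ∈ CC → ρ C = i.1 → pick i = C :=
    fun i C hC hρC => hρinj _ (hpickCC i) _ hC (by rw [hpickρ i, hρC])
  refine ⟨{x : ℝ // x ∈ ρ '' CC}, inferInstance, fun i => (pick i).addSubgroupOf B, ?_, ?_, ?_⟩
  · intro b
    refine ⟨⟨ρ B, ⟨B, hBCC, rfl⟩⟩, ?_⟩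
    show b ∈ (pick ⟨ρ B, ⟨B, hBCC, rfl⟩⟩).addSubgroupOf B
    rw [hpickuniq _ B hBCC rfl]
    exact AddSubgroup.mem_addSubgroupOf.2 b.2
  · intro i j hij
    have hij' : (i : ℝ) < (j : ℝ) := hij
    have h1 : ρ (pick i) < ρ (pick j) := by rw [hpickρ i, hpickρ j]; exact hij'
    have h2 : pick j < pick i := by
      rcases hchain _ (hpickCC i) _ (hpickCC j) with h | h
      · rcases eq_or_lt_of_le h with he | hl
        · exact absurd (he ▸ h1) (lt_irrefl _)
        · exact absurd (lt_trans h1 (hρlt _ _ (hCCle _ (hpickCC j)) hl)) (lt_irrefl _)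
      · rcases eq_or_lt_of_le h with he | hl
        · exact absurd (he ▸ h1) (lt_irrefl _)
        · exact hl
    exact addSubgroupOf_lt' (hCCle _ (hpickCC i)) h2
  · intro i x y hx hx' hy hy'
    by_cases hne : pick i = ⊥
    · have hx0 : (x : A) = 0 := by
        have := AddSubgroup.mem_addSubgroupOf.1 hx
        rw [hne] at this
        simpa using this
      have hy0 : (y : A) = 0 := by
        have := AddSubgroup.mem_addSubgroupOf.1 hy
        rw [hne] at this
        simpa using this
      show f (x : A) = f (y : A)
      rw [hx0, hy0]
    · obtain ⟨C', hC'CC, hC'lt, hC'con⟩ := hsucc (pick i) (hpickCC i) hne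
      set j : {x : ℝ // x ∈ ρ '' CC} := ⟨ρ C', ⟨C', hC'CC, rfl⟩⟩ with hj
      have hij : (i : ℝ) < (j : ℝ) := by
        have h1 : (i : ℝ) = ρ (pick i) := (hpickρ i).symm
        have h2 : (j : ℝ) = ρ C' := rfl
        rw [h1, h2]
        exact hρlt C' (pick i) (hCCle _ (hpickCC i)) hC'lt
      have hij' : i < j := hij
      have hpj : pick j = C' := hpickuniq j C' hC'CC rfl
      have hxC' : (x : A) ∉ C' := by
        intro hmem
        exact hx' j hij' (AddSubgroup.mem_addSubgroupOf.2 (hpj ▸ hmem))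
      have hyC' : (y : A) ∉ C' := by
        intro hmem
        exact hy' j hij' (AddSubgroup.mem_addSubgroupOf.2 (hpj ▸ hmem))
      exact hC'con (x : A) (y : A) (AddSubgroup.mem_addSubgroupOf.1 hx) hxC'
        (AddSubgroup.mem_addSubgroupOf.1 hy) hyC'

/-- if `h ∘ f` is an abelian flag function for every map `h : S → ℤ/4`,
then `f` is an abelian flag function (torsion-free case). -/
theorem stmt_9 {A S : Type*} [AddCommGroup A] [NoZeroSMulDivisors ℤ A] (f : A → S)
    (h : ∀ h' : S → ZMod 4, IsAFgen (h' ∘ f)) :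
    IsAFgen f := by
  classical
  constructor
  · intro n hn a
    have h1 := (h (fun s => if s = f a then (0 : ZMod 4) else 1)).1 n hn a
    simp only [Function.comp_apply, if_pos rfl] at h1
    by_contra hne
    rw [if_neg hne] at h1
    exact absurd h1 (by decide)
  · intro B hFG
    exact main_flag f B hFG (fun h' E hE => (h h').2 E hE)
end
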